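/- arXiv:2107.08625 — 6 statements merged into one kernel-verified Lean document; each statement's English description precedes it below -/
import Mathlib

section
/- Let V and V′ be two regular L⁰(𝓕)-modules such that V contains a free L⁰(𝓕)-submodule of rank 2 (i.e., V contains two L⁰(𝓕)-independent elements). If T : V → V′ is stable, injective, and maps each L⁰-line to an L⁰-line, then T is L⁰-affine. -/
open MeasureTheory

/-- `L⁰(𝓕)` is a commutative algebra; Mathlib lacks the ring instance on `AEEqFun`,
so we provide it by transporting proofs along the injection into germs. -/
noncomputable instance AEEqFun.instCommRingReal {Ω : Type*} [MeasurableSpace Ω]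
    {P : Measure Ω} : CommRing (Ω →ₘ[P] ℝ) :=
  { AEEqFun.instAddCommGroup, AEEqFun.instCommMonoid with
    left_distrib := fun f g h => AEEqFun.toGerm_injective <| by
      simp only [AEEqFun.mul_toGerm, AEEqFun.add_toGerm, mul_add]
    right_distrib := fun f g h => AEEqFun.toGerm_injective <| by
      simp only [AEEqFun.mul_toGerm, AEEqFun.add_toGerm, add_mul]
    zero_mul := fun f => AEEqFun.toGerm_injective <| by
      simp only [AEEqFun.mul_toGerm, AEEqFun.zero_toGerm, zero_mul]
    mul_zero := fun f => AEEqFun.toGerm_injective <| by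
      simp only [AEEqFun.mul_toGerm, AEEqFun.zero_toGerm, mul_zero] }

namespace L0

variable {Ω : Type*} [MeasurableSpace Ω]

/-- `ind P A hA` is `Ĩ_A`, the equivalence class in `L⁰(𝓕)` of the indicator
function of the measurable set `A`. -/
noncomputable def ind (P : Measure Ω) (A : Set Ω) (hA : MeasurableSet A) : Ω →ₘ[P] ℝ :=
  AEEqFun.mk (A.indicator fun _ => (1 : ℝ))
    (measurable_const.indicator hA).aestronglyMeasurable

variable (P : Measure Ω)

/-- An `L⁰(𝓕)`-module `V` is regular if `x = y` whenever there is a countable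
measurable partition `{Aₙ}` of `Ω` with `Ĩ_{Aₙ}·x = Ĩ_{Aₙ}·y` for all `n`. -/
def IsRegular (V : Type*) [AddCommGroup V] [Module (Ω →ₘ[P] ℝ) V] : Prop :=
  ∀ x y : V,
    (∃ (A : ℕ → Set Ω) (hA : ∀ n, MeasurableSet (A n)),
      (∀ m n, m ≠ n → A m ∩ A n = ∅) ∧ (⋃ n, A n) = Set.univ ∧
      ∀ n, ind P (A n) (hA n) • x = ind P (A n) (hA n) • y) → x = y

/-- `T : V → V'` is stable if `T(Ĩ_A·x + Ĩ_{Aᶜ}·y) = Ĩ_A·T(x) + Ĩ_{Aᶜ}·T(y)`. -/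
def IsStable {V V' : Type*} [AddCommGroup V] [Module (Ω →ₘ[P] ℝ) V]
    [AddCommGroup V'] [Module (Ω →ₘ[P] ℝ) V'] (T : V → V') : Prop :=
  ∀ (x y : V) (A : Set Ω) (hA : MeasurableSet A),
    T (ind P A hA • x + ind P Aᶜ hA.compl • y)
      = ind P A hA • T x + ind P Aᶜ hA.compl • T y

/-- `T : V → V'` has the local property if `Ĩ_A·T(x) = Ĩ_A·T(Ĩ_A·x)`. -/
def HasLocalProperty {V V' : Type*} [AddCommGroup V] [Module (Ω →ₘ[P] ℝ) V]
    [AddCommGroup V'] [Module (Ω →ₘ[P] ℝ) V'] (T : V → V') : Prop :=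
  ∀ (x : V) (A : Set Ω) (hA : MeasurableSet A),
    ind P A hA • T x = ind P A hA • T (ind P A hA • x)

/-- `T : V → V'` is `L⁰`-affine if `T = S + b` with `S` an `L⁰`-linear map
(that is, a module homomorphism) and `b ∈ V'`. -/
def IsL0Affine {V V' : Type*} [AddCommGroup V] [Module (Ω →ₘ[P] ℝ) V]
    [AddCommGroup V'] [Module (Ω →ₘ[P] ℝ) V'] (T : V → V') : Prop :=
  ∃ (S : V →ₗ[Ω →ₘ[P] ℝ] V') (b : V'), ∀ x : V, T x = S x + b

/-- The `L⁰`-line segment `[x,y] = {λx + (1−λ)y : λ ∈ L⁰(𝓕), 0 ≤ λ ≤ 1}`. -/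
def seg {V : Type*} [AddCommGroup V] [Module (Ω →ₘ[P] ℝ) V] (x y : V) : Set V :=
  {z | ∃ lam : Ω →ₘ[P] ℝ, 0 ≤ lam ∧ lam ≤ 1 ∧ z = lam • x + (1 - lam) • y}

/-- The `L⁰`-line `l(x,y) = {λx + (1−λ)y : λ ∈ L⁰(𝓕)}`. -/
def line {V : Type*} [AddCommGroup V] [Module (Ω →ₘ[P] ℝ) V] (x y : V) : Set V :=
  {z | ∃ lam : Ω →ₘ[P] ℝ, z = lam • x + (1 - lam) • y}

/-- `x, y ∈ V` are `L⁰(𝓕)`-independent if `ξx + ηy = 0` implies `ξ = η = 0`. -/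
def Indep {V : Type*} [AddCommGroup V] [Module (Ω →ₘ[P] ℝ) V] (x y : V) : Prop :=
  ∀ ξ η : Ω →ₘ[P] ℝ, ξ • x + η • y = 0 → ξ = 0 ∧ η = 0

/-- `x ∈ V` has full support if `Ĩ_A·x = 0` implies `P(A) = 0`. -/
def FullSupport {V : Type*} [AddCommGroup V] [Module (Ω →ₘ[P] ℝ) V] (x : V) : Prop :=
  ∀ (A : Set Ω) (hA : MeasurableSet A), ind P A hA • x = 0 → P A = 0

end L0

section Rlemmas

open MeasureTheory L0

variable {Ω : Type*} [MeasurableSpace Ω] {P : Measure Ω}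

namespace FTAG

noncomputable def cst (P : Measure Ω) (r : ℝ) : Ω →ₘ[P] ℝ := AEEqFun.const Ω r

lemma cst_def (r : ℝ) : cst P r = AEEqFun.mk (fun _ => r) aestronglyMeasurable_const := rfl

lemma cst_add (r s : ℝ) : cst P (r + s) = cst P r + cst P s := by
  rw [cst_def, cst_def, cst_def, AEEqFun.mk_add_mk]
  rfl

lemma cst_mul (r s : ℝ) : cst P (r * s) = cst P r * cst P s := by
  rw [cst_def, cst_def, cst_def, AEEqFun.mk_mul_mk]
  rfl

lemma cst_one : cst P 1 = 1 := by
  rw [cst_def, AEEqFun.one_def]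

lemma cst_zero : cst P 0 = 0 := by
  rw [cst_def, AEEqFun.zero_def]

lemma ind_eq_mk (A : Set Ω) (hA : MeasurableSet A) :
    ind P A hA = AEEqFun.mk (A.indicator fun _ => (1:ℝ))
      (measurable_const.indicator hA).aestronglyMeasurable := rfl

lemma ind_mul (A B : Set Ω) (hA : MeasurableSet A) (hB : MeasurableSet B) :
    ind P A hA * ind P B hB = ind P (A ∩ B) (hA.inter hB) := by
  rw [ind_eq_mk, ind_eq_mk, ind_eq_mk, AEEqFun.mk_mul_mk]
  apply AEEqFun.mk_eq_mk.2
  apply Filter.Eventually.of_forall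
  intro ω
  by_cases h1 : ω ∈ A <;> by_cases h2 : ω ∈ B <;>
    simp [Set.indicator_apply, h1, h2, Set.mem_inter_iff]

lemma ind_univ : ind P Set.univ MeasurableSet.univ = 1 := by
  rw [ind_eq_mk, AEEqFun.one_def]
  apply AEEqFun.mk_eq_mk.2
  apply Filter.Eventually.of_forall
  intro ω; simp

lemma ind_empty : ind P ∅ MeasurableSet.empty = 0 := by
  rw [ind_eq_mk, AEEqFun.zero_def]
  apply AEEqFun.mk_eq_mk.2
  apply Filter.Eventually.of_forall
  intro ω; simp

lemma ind_add_compl (A : Set Ω) (hA : MeasurableSet A) :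
    ind P A hA + ind P Aᶜ hA.compl = 1 := by
  rw [ind_eq_mk, ind_eq_mk, AEEqFun.mk_add_mk, AEEqFun.one_def]
  apply AEEqFun.mk_eq_mk.2
  apply Filter.Eventually.of_forall
  intro ω
  by_cases h1 : ω ∈ A <;> simp [Set.indicator_apply, h1]

lemma ind_compl_eq (A : Set Ω) (hA : MeasurableSet A) :
    ind P Aᶜ hA.compl = 1 - ind P A hA := by
  rw [← ind_add_compl A hA]; ring

lemma ind_null (A : Set Ω) (hA : MeasurableSet A) (h : P A = 0) :
    ind P A hA = 0 := by
  rw [ind_eq_mk, AEEqFun.zero_def]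
  apply AEEqFun.mk_eq_mk.2
  rw [Filter.eventuallyEq_iff_exists_mem]
  refine ⟨Aᶜ, ?_, fun ω hω => by simp [Set.indicator_apply, (by simpa using hω : ω ∉ A)]⟩
  rw [MeasureTheory.mem_ae_iff, compl_compl]; exact h

/-- the support decomposition of an element of `L⁰`. -/
lemma exists_supp (ξ : Ω →ₘ[P] ℝ) :
    ∃ (A : Set Ω) (hA : MeasurableSet A) (η : Ω →ₘ[P] ℝ),
      ξ * η = ind P A hA ∧ ind P A hA * ξ = ξ := by
  set g : Ω → ℝ := ⇑ξ with hgdef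
  have hg : Measurable g := ξ.measurable
  refine ⟨{ω | g ω ≠ 0}, (show MeasurableSet {ω | g ω ≠ 0} from measurableSet_preimage hg (measurableSet_singleton 0).compl), AEEqFun.mk (fun ω => (g ω)⁻¹)
    (hg.inv).aestronglyMeasurable, ?_, ?_⟩
  · conv_lhs => rw [← AEEqFun.mk_coeFn ξ]
    rw [AEEqFun.mk_mul_mk, ind_eq_mk]
    apply AEEqFun.mk_eq_mk.2
    apply Filter.Eventually.of_forall
    intro ω
    by_cases h : g ω = 0 <;> simp [Set.indicator_apply, h, mul_inv_cancel₀]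
    exact mul_inv_cancel₀ h
  · conv_lhs => rw [← AEEqFun.mk_coeFn ξ]
    conv_rhs => rw [← AEEqFun.mk_coeFn ξ]
    rw [ind_eq_mk, AEEqFun.mk_mul_mk]
    apply AEEqFun.mk_eq_mk.2
    apply Filter.Eventually.of_forall
    intro ω
    by_cases h : g ω = 0
    · rw [Pi.mul_apply, show (⇑ξ) ω = 0 from h]; simp
    · simp [Set.indicator_apply, h]

end FTAG
end Rlemmas
section KeyR
open MeasureTheory L0
variable {Ω : Type*} [MeasurableSpace Ω] {P : Measure Ω}
namespace FTAG

lemma ind_idem (A : Set Ω) (hA : MeasurableSet A) :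
    ind P A hA * ind P A hA = ind P A hA := by
  rw [ind_mul]
  have : A ∩ A = A := Set.inter_self A
  congr 1

lemma coe_ae_eq_zero {u : Ω →ₘ[P] ℝ} (h : ⇑u =ᵐ[P] (fun _ => (0:ℝ))) : u = 0 := by
  rw [← AEEqFun.mk_coeFn u, AEEqFun.zero_def]
  exact AEEqFun.mk_eq_mk.2 h

lemma zsmul_one_eq_cst (k : ℤ) : (k : ℤ) • (1 : Ω →ₘ[P] ℝ) = cst P (k : ℝ) := by
  rw [AEEqFun.one_def, AEEqFun.smul_mk, cst_def]
  apply AEEqFun.mk_eq_mk.2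
  apply Filter.Eventually.of_forall
  intro ω
  simp

lemma zsmul_eq_cst_mul (k : ℤ) (u : Ω →ₘ[P] ℝ) : (k : ℤ) • u = cst P (k : ℝ) * u := by
  conv_lhs => rw [← AEEqFun.mk_coeFn u]
  conv_rhs => rw [← AEEqFun.mk_coeFn u]
  rw [AEEqFun.smul_mk, cst_def, AEEqFun.mk_mul_mk]
  apply AEEqFun.mk_eq_mk.2
  apply Filter.Eventually.of_forall
  intro ω
  simp [zsmul_eq_mul]

lemma keyR (C : Set Ω) (hC : MeasurableSet C) (σ : (Ω →ₘ[P] ℝ) → (Ω →ₘ[P] ℝ))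
    (hmem : ∀ a, σ a = ind P C hC * σ a)
    (hadd : ∀ a b, σ (a + b) = σ a + σ b)
    (hmul : ∀ a b, σ (a * b) = σ a * σ b)
    (hone : σ 1 = ind P C hC)
    (hloc : ∀ (A : Set Ω) (hA : MeasurableSet A) (a),
      σ (ind P A hA * a) = ind P A hA * σ a) :
    ∀ a, σ a = ind P C hC * a := by
  intro a
  set eC := ind P C hC with heC
  have hidem : eC * eC = eC := by rw [heC]; exact ind_idem C hC
  let F : (Ω →ₘ[P] ℝ) →+ (Ω →ₘ[P] ℝ) := AddMonoidHom.mk' σ hadd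
  have hF : ∀ u, F u = σ u := fun _ => rfl
  have hσsub : ∀ u v, σ (u - v) = σ u - σ v := by
    intro u v
    rw [← hF, ← hF, ← hF, map_sub]
  have hint : ∀ k : ℤ, σ (cst P (k:ℝ)) = cst P (k:ℝ) * eC := by
    intro k
    rw [← zsmul_one_eq_cst, ← hF, map_zsmul, hF, hone, zsmul_eq_cst_mul, zsmul_one_eq_cst]
  have hind : ∀ (A : Set Ω) (hA : MeasurableSet A),
      σ (ind P A hA) = ind P A hA * eC := by
    intro A hA
    have := hloc A hA 1
    rwa [mul_one, hone] at this
  have hrat : ∀ (k : ℤ) (n : ℕ), σ (cst P ((k:ℝ)/(n+1))) = cst P ((k:ℝ)/(n+1)) * eC := by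
    intro k n
    have hne : ((n:ℝ)+1) ≠ 0 := by positivity
    have h1 : cst P ((n:ℝ)+1) * cst P ((k:ℝ)/(n+1)) = cst P (k:ℝ) := by
      rw [← cst_mul]
      congr 1
      field_simp
    have h2 := congrArg σ h1
    rw [hmul, hint k] at h2
    have h3 : σ (cst P ((n:ℝ)+1)) = cst P ((n:ℝ)+1) * eC := by
      have := hint ((n:ℤ)+1)
      push_cast at this
      exact this
    rw [h3] at h2
    have h4 := congrArg (fun z => cst P (((n:ℝ)+1)⁻¹) * z) h2
    simp only [← mul_assoc, ← cst_mul, inv_mul_cancel₀ hne, cst_one, one_mul] at h4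
    calc σ (cst P ((k:ℝ)/(n+1))) = eC * σ (cst P ((k:ℝ)/(n+1))) := hmem _
    _ = cst P (((n:ℝ)+1)⁻¹ * (k:ℝ)) * eC := by exact h4
    _ = cst P ((k:ℝ)/(n+1)) * eC := by
        rw [div_eq_inv_mul]
  set d := σ a - eC * a with hd
  set g : Ω → ℝ := ⇑a with hgdef
  have hg : Measurable g := a.measurable
  have hcoeeC : ⇑eC =ᵐ[P] C.indicator (fun _ => (1:ℝ)) := by
    rw [heC, ind_eq_mk]
    exact AEEqFun.coeFn_mk _ _
  have hcoecst : ∀ r:ℝ, ⇑(cst P r) =ᵐ[P] (fun _ => r) := fun r => by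
    rw [cst_def]
    exact AEEqFun.coeFn_mk _ _
  have key : ∀ n : ℕ, ∀ᵐ ω ∂P, |(⇑d) ω| ≤ 1/((n:ℝ)+1) := by
    intro n
    set ε : ℝ := 1/((n:ℝ)+1) with hεdef
    have hε : 0 < ε := by positivity
    set A : ℤ → Set Ω := fun k => g⁻¹' (Set.Ico ((k:ℝ)*ε) (((k:ℝ)+1)*ε)) with hA
    have hAmeas : ∀ k, MeasurableSet (A k) := fun k => hg measurableSet_Ico
    have hmemA : ∀ (k : ℤ) (ω : Ω), ω ∈ A k ↔ ((k:ℝ)*ε ≤ g ω ∧ g ω < ((k:ℝ)+1)*ε) := by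
      intro k ω
      rw [hA]
      simp [Set.mem_preimage, Set.mem_Ico]
    have hcover : ∀ ω, ω ∈ A ⌊g ω / ε⌋ := by
      intro ω
      rw [hmemA]
      constructor
      · calc (⌊g ω / ε⌋ : ℝ) * ε ≤ (g ω / ε) * ε :=
            mul_le_mul_of_nonneg_right (Int.floor_le _) hε.le
        _ = g ω := by field_simp
      · calc g ω = (g ω / ε) * ε := by field_simp
        _ < ((⌊g ω / ε⌋:ℝ)+1) * ε := mul_lt_mul_of_pos_right (Int.lt_floor_add_one _) hε
    have claim : ∀ k : ℤ, ∀ᵐ ω ∂P, ω ∈ A k → |(⇑d) ω| ≤ ε := by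
      intro k
      set e := ind P (A k) (hAmeas k) with he
      set h₁ : Ω → ℝ := (A k).indicator (fun ω => g ω - (k:ℝ)*ε) with hh₁
      have hh₁m : Measurable h₁ := ((hg.sub measurable_const).indicator (hAmeas k))
      have hh₁nonneg : ∀ ω, 0 ≤ h₁ ω := by
        intro ω
        rw [hh₁]
        by_cases hω : ω ∈ A k
        · rw [Set.indicator_of_mem hω]
          have h' := ((hmemA k ω).1 hω).1
          show 0 ≤ g ω - (k:ℝ)*ε
          linarith
        · rw [Set.indicator_of_notMem hω]
      have hh₁le : ∀ ω, h₁ ω ≤ ε := by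
        intro ω
        rw [hh₁]
        by_cases hω : ω ∈ A k
        · rw [Set.indicator_of_mem hω]
          have h' := ((hmemA k ω).1 hω).2
          have h'' : ((k:ℝ)+1)*ε = (k:ℝ)*ε + ε := by ring
          show g ω - (k:ℝ)*ε ≤ ε
          linarith
        · rw [Set.indicator_of_notMem hω]
          exact hε.le
      set δ : Ω →ₘ[P] ℝ := AEEqFun.mk h₁ hh₁m.aestronglyMeasurable with hδ
      have hcoee : ⇑e =ᵐ[P] (A k).indicator (fun _ => (1:ℝ)) := by
        rw [he, ind_eq_mk]
        exact AEEqFun.coeFn_mk _ _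
      have hcoeδ : ⇑δ =ᵐ[P] h₁ := by
        rw [hδ]
        exact AEEqFun.coeFn_mk _ _
      have fact1 : e * a = cst P ((k:ℝ)*ε) * e + δ := by
        rw [he, hδ, ind_eq_mk, cst_def]
        conv_lhs => rw [← AEEqFun.mk_coeFn a]
        rw [AEEqFun.mk_mul_mk, AEEqFun.mk_mul_mk, AEEqFun.mk_add_mk]
        apply AEEqFun.mk_eq_mk.2
        apply Filter.Eventually.of_forall
        intro ω
        by_cases hω : ω ∈ A k <;>
          simp [Set.indicator_apply, hω, hh₁, ← hgdef] <;> ring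
      have fact2 : ∃ s, δ = s * s := by
        refine ⟨AEEqFun.mk (fun ω => Real.sqrt (h₁ ω)) (hh₁m.sqrt).aestronglyMeasurable, ?_⟩
        rw [hδ, AEEqFun.mk_mul_mk]
        apply AEEqFun.mk_eq_mk.2
        apply Filter.Eventually.of_forall
        intro ω
        exact (Real.mul_self_sqrt (hh₁nonneg ω)).symm
      have fact3 : ∃ s, cst P ε * e - δ = s * s := by
        set h₂ : Ω → ℝ := (A k).indicator (fun ω => (((k:ℝ)+1))*ε - g ω) with hh₂
        have hh₂m : Measurable h₂ := ((measurable_const.sub hg).indicator (hAmeas k))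
        have hh₂nonneg : ∀ ω, 0 ≤ h₂ ω := by
          intro ω
          rw [hh₂]
          by_cases hω : ω ∈ A k
          · rw [Set.indicator_of_mem hω]
            have h' := ((hmemA k ω).1 hω).2
            show 0 ≤ ((k:ℝ)+1)*ε - g ω
            linarith
          · rw [Set.indicator_of_notMem hω]
        have heq : cst P ε * e - δ = AEEqFun.mk h₂ hh₂m.aestronglyMeasurable := by
          rw [he, hδ, ind_eq_mk, cst_def, AEEqFun.mk_mul_mk, ← AEEqFun.mk_sub]
          apply AEEqFun.mk_eq_mk.2
          apply Filter.Eventually.of_forall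
          intro ω
          by_cases hω : ω ∈ A k <;>
            simp [Set.indicator_apply, hω, hh₁, hh₂] <;> ring
        refine ⟨AEEqFun.mk (fun ω => Real.sqrt (h₂ ω)) (hh₂m.sqrt).aestronglyMeasurable, ?_⟩
        rw [heq, AEEqFun.mk_mul_mk]
        apply AEEqFun.mk_eq_mk.2
        apply Filter.Eventually.of_forall
        intro ω
        exact (Real.mul_self_sqrt (hh₂nonneg ω)).symm
      have hσkε : ∀ m : ℤ, σ (cst P ((m:ℝ)*ε)) = cst P ((m:ℝ)*ε) * eC := by
        intro m
        have h' : (m:ℝ)*ε = (m:ℝ)/((n:ℝ)+1) := by rw [hεdef]; ring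
        rw [h']
        exact hrat m n
      have hσε : σ (cst P ε) = cst P ε * eC := by
        have := hσkε 1
        simpa using this
      have hσe : σ e = e * eC := by
        rw [he]
        exact hind _ _
      obtain ⟨s₁, hs₁⟩ := fact2
      obtain ⟨s₂, hs₂⟩ := fact3
      have hσδsq : σ δ = σ s₁ * σ s₁ := by rw [hs₁, hmul]
      have h5 : σ (e * a) = cst P ((k:ℝ)*ε) * e * eC + σ δ := by
        have H1 : σ (e*a) = σ (cst P ((k:ℝ)*ε) * e) + σ δ := by rw [fact1, hadd]
        have H2 : σ (cst P ((k:ℝ)*ε) * e) = (cst P ((k:ℝ)*ε) * eC) * (e * eC) := by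
          rw [hmul, hσkε k, hσe]
        rw [H1, H2]
        linear_combination (cst P ((k:ℝ)*ε) * e) * hidem
      have h7 : eC * (e * a) = cst P ((k:ℝ)*ε) * e * eC + eC * δ := by
        rw [fact1]
        ring
      have hmain : e * d = σ δ - eC * δ := by
        have h6 : σ (e * a) = e * σ a := by
          rw [he]
          exact hloc _ _ _
        rw [hd]
        calc e * (σ a - eC * a) = e * σ a - eC * (e * a) := by ring
        _ = (cst P ((k:ℝ)*ε) * e * eC + σ δ) - (cst P ((k:ℝ)*ε) * e * eC + eC * δ) := by
            rw [← h6, h7, h5]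
        _ = σ δ - eC * δ := by ring
      have hσδsq2 : cst P ε * e * eC - σ δ = σ s₂ * σ s₂ := by
        have H3 := congrArg σ hs₂
        rw [hmul] at H3
        have H1 : σ (cst P ε * e - δ) = σ (cst P ε * e) - σ δ := hσsub _ _
        have H2 : σ (cst P ε * e) = (cst P ε * eC) * (e * eC) := by rw [hmul, hσε, hσe]
        rw [← H3, H1, H2]
        linear_combination (-(cst P ε * e)) * hidem
      -- a.e. bounds
      have B1 : ∀ᵐ ω ∂P, (⇑(e*d)) ω = (A k).indicator (fun _ => (1:ℝ)) ω * (⇑d) ω := by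
        filter_upwards [AEEqFun.coeFn_mul e d, hcoee] with ω h h'
        rw [h, Pi.mul_apply, h']
      have B2 : ∀ᵐ ω ∂P, 0 ≤ (⇑(σ δ)) ω := by
        rw [hσδsq]
        filter_upwards [AEEqFun.coeFn_mul (σ s₁) (σ s₁)] with ω h
        rw [h, Pi.mul_apply]
        exact mul_self_nonneg _
      have B3 : ∀ᵐ ω ∂P, (⇑(σ δ)) ω ≤ ε := by
        have hrw : σ δ = cst P ε * e * eC - σ s₂ * σ s₂ := by rw [← hσδsq2]; ring
        rw [hrw]
        filter_upwards [AEEqFun.coeFn_sub (cst P ε * e * eC) (σ s₂ * σ s₂),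
          AEEqFun.coeFn_mul (cst P ε * e) eC, AEEqFun.coeFn_mul (cst P ε) e,
          AEEqFun.coeFn_mul (σ s₂) (σ s₂), hcoee, hcoeeC, hcoecst ε] with ω hsub hm1 hm2 hm3 hAe hCe hce
        rw [hsub, Pi.sub_apply, hm1, Pi.mul_apply, hm2, Pi.mul_apply, hm3, Pi.mul_apply,
          hAe, hCe, hce]
        have hsq : 0 ≤ (⇑(σ s₂)) ω * (⇑(σ s₂)) ω := mul_self_nonneg _
        by_cases h1 : ω ∈ A k <;> by_cases h2 : ω ∈ C <;>
          simp [Set.indicator_apply, h1, h2] <;> linarith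
      have B4 : ∀ᵐ ω ∂P, 0 ≤ (⇑(eC*δ)) ω ∧ (⇑(eC*δ)) ω ≤ ε := by
        filter_upwards [AEEqFun.coeFn_mul eC δ, hcoeeC, hcoeδ] with ω h hCc hδc
        rw [h, Pi.mul_apply, hCc, hδc]
        by_cases hω : ω ∈ C
        · rw [Set.indicator_of_mem hω, one_mul]
          exact ⟨hh₁nonneg ω, hh₁le ω⟩
        · rw [Set.indicator_of_notMem hω, zero_mul]
          exact ⟨le_refl 0, hε.le⟩
      have B5 : ∀ᵐ ω ∂P, (⇑(e*d)) ω = (⇑(σ δ)) ω - (⇑(eC*δ)) ω := by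
        rw [hmain]
        filter_upwards [AEEqFun.coeFn_sub (σ δ) (eC*δ)] with ω h
        rw [h, Pi.sub_apply]
      filter_upwards [B1, B2, B3, B4, B5] with ω h1 h2 h3 h4 h5
      intro hωA
      rw [Set.indicator_of_mem hωA, one_mul] at h1
      rw [abs_le]
      constructor <;> linarith [h4.1, h4.2]
    have hall := ae_all_iff.2 claim
    filter_upwards [hall] with ω h
    exact h ⌊g ω / ε⌋ (hcover ω)
  have hae : ∀ᵐ ω ∂P, ∀ n:ℕ, |(⇑d) ω| ≤ 1/((n:ℝ)+1) := ae_all_iff.2 key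
  have hd0 : d = 0 := by
    apply coe_ae_eq_zero
    filter_upwards [hae] with ω h
    by_contra h0
    have habs : 0 < |(⇑d) ω| := abs_pos.2 h0
    obtain ⟨m, hm⟩ := exists_nat_one_div_lt habs
    exact absurd (h m) (not_le.2 (by exact_mod_cast hm))
  have := sub_eq_zero.1 (hd ▸ hd0)
  rw [this, heC]

end FTAG
end KeyR
section ModuleBasics
open MeasureTheory L0
variable {Ω : Type*} [MeasurableSpace Ω] {P : Measure Ω}
variable {V V' : Type*} [AddCommGroup V] [Module (Ω →ₘ[P] ℝ) V]
  [AddCommGroup V'] [Module (Ω →ₘ[P] ℝ) V']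

namespace FTAG

def IsInd (P : Measure Ω) (f : Ω →ₘ[P] ℝ) : Prop :=
  ∃ (A : Set Ω) (hA : MeasurableSet A), f = ind P A hA

lemma IsInd.one : IsInd P (1 : Ω →ₘ[P] ℝ) := ⟨Set.univ, MeasurableSet.univ, ind_univ.symm⟩

lemma IsInd.mul {f g : Ω →ₘ[P] ℝ} (hf : IsInd P f) (hg : IsInd P g) : IsInd P (f * g) := by
  obtain ⟨A, hA, rfl⟩ := hf
  obtain ⟨B, hB, rfl⟩ := hg
  exact ⟨A ∩ B, hA.inter hB, (ind_mul A B hA hB)⟩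

lemma IsInd.idem {f : Ω →ₘ[P] ℝ} (hf : IsInd P f) : f * f = f := by
  obtain ⟨A, hA, rfl⟩ := hf
  exact ind_idem A hA

lemma IsInd.compl {f : Ω →ₘ[P] ℝ} (hf : IsInd P f) : IsInd P (1 - f) := by
  obtain ⟨A, hA, rfl⟩ := hf
  exact ⟨Aᶜ, hA.compl, (ind_compl_eq A hA).symm⟩

lemma IsInd.mul_compl {f : Ω →ₘ[P] ℝ} (hf : IsInd P f) : f * (1 - f) = 0 := by
  linear_combination -hf.idem

/-- the hypothesis class: stable, injective, lines onto lines. -/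
structure Good {Ω : Type*} [MeasurableSpace Ω] (P : Measure Ω) {V V' : Type*}
    [AddCommGroup V] [Module (Ω →ₘ[P] ℝ) V]
    [AddCommGroup V'] [Module (Ω →ₘ[P] ℝ) V'] (T : V → V') : Prop where
  stable : IsStable P T
  inj : Function.Injective T
  lines : ∀ x y : V, ∃ u v : V', T '' line P x y = line P u v

lemma smul_mem_line (lam : Ω →ₘ[P] ℝ) (x y : V) : lam • x + (1-lam) • y ∈ line P x y :=
  ⟨lam, rfl⟩

lemma self_mem_line (x y : V) : x ∈ line P x y := ⟨1, by simp⟩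

lemma right_mem_line (x y : V) : y ∈ line P x y := ⟨0, by simp⟩

lemma Good.stable' {T : V → V'} (hT : Good P T) {f : Ω →ₘ[P] ℝ} (hf : IsInd P f)
    (x y : V) : T (f • x + (1-f) • y) = f • T x + (1-f) • T y := by
  obtain ⟨A, hA, rfl⟩ := hf
  have h := hT.stable x y A hA
  rwa [ind_compl_eq A hA] at h

lemma Good.loc {T : V → V'} (hT : Good P T) (hT0 : T 0 = 0) {f : Ω →ₘ[P] ℝ}
    (hf : IsInd P f) (x : V) : T (f • x) = f • T x := by
  have h := hT.stable' hf x 0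
  rw [smul_zero, add_zero, hT0, smul_zero, add_zero] at h
  exact h

lemma Good.cancel {T : V → V'} (hT : Good P T) {f : Ω →ₘ[P] ℝ} (hf : IsInd P f)
    {x y : V} (h : f • T x = f • T y) : f • x = f • y := by
  have hz := hT.stable' hf x y
  rw [h] at hz
  have h1 : f • T y + (1-f) • T y = T y := by module
  rw [h1] at hz
  have h2 := hT.inj hz
  have h3 : f • (f • x + (1-f) • y) = f • y := by rw [h2]
  rw [smul_add, ← mul_smul, ← mul_smul, hf.idem, hf.mul_compl, zero_smul, add_zero] at h3
  exact h3

/-- the image of a line is the line of the images. -/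
lemma Good.lineMap {T : V → V'} (hT : Good P T) (hT0 : T 0 = 0) (x y : V) :
    T '' line P x y = line P (T x) (T y) := by
  obtain ⟨u, v, huv⟩ := hT.lines x y
  have hx : T x ∈ line P u v := huv ▸ Set.mem_image_of_mem T (self_mem_line x y)
  have hy : T y ∈ line P u v := huv ▸ Set.mem_image_of_mem T (right_mem_line x y)
  obtain ⟨α, hα⟩ := hx
  obtain ⟨β, hβ⟩ := hy
  obtain ⟨A, hA, η, hη1, hη2⟩ := exists_supp (α - β)
  set e := ind P A hA with he
  have hee : IsInd P e := ⟨A, hA, rfl⟩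
  have hfe : IsInd P (1-e) := hee.compl
  have hTxy : T x - T y = (α - β) • (u - v) := by rw [hα, hβ]; module
  have hco0 : (1-e)*(α-β) = 0 := by linear_combination -hη2
  have hfTxy : (1-e) • T x = (1-e) • T y := by
    have h0 : (1-e) • (T x - T y) = 0 := by
      rw [hTxy, ← mul_smul, hco0, zero_smul]
    rw [smul_sub] at h0
    exact sub_eq_zero.1 h0
  have hfxy : (1-e) • x = (1-e) • y := hT.cancel hfe hfTxy
  apply Set.eq_of_subset_of_subset
  · rintro z ⟨w, ⟨μ, rfl⟩, rfl⟩
    set z := T (μ • x + (1-μ) • y) with hz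
    have hzl : z ∈ line P u v := huv ▸ Set.mem_image_of_mem T (smul_mem_line μ x y)
    obtain ⟨lam, hlam⟩ := hzl
    have e1 : (1-e) • (μ • x + (1-μ) • y) = (1-e) • x := by
      have h' : (1-e) • (μ • x + (1-μ) • y) = μ • ((1-e) • x) + (1-μ) • ((1-e) • y) := by
        module
      rw [h', ← hfxy]
      module
    have key1 : (1-e) • z = (1-e) • T x := by
      rw [hz, ← hT.loc hT0 hfe, e1, hT.loc hT0 hfe]
    have key2 : z - T x = (lam - α) • (u - v) := by rw [hlam, hα]; module
    have k3 : ((lam-α)*(1-e)) • (u-v) = 0 := by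
      have h4 : (1-e) • (z - T x) = ((lam-α)*(1-e)) • (u-v) := by rw [key2]; module
      rw [smul_sub, key1, sub_self] at h4
      exact h4.symm
    refine ⟨1 + e*((lam-α)*η), ?_⟩
    have hco : (e*((lam-α)*η))*(α-β) = (lam-α)*e := by
      linear_combination (e*(lam-α))*hη1 + (lam-α)*(ind_idem A hA)
    have expand : (1 + e*((lam-α)*η)) • T x + (1 - (1 + e*((lam-α)*η))) • T y
        = T x + ((e*((lam-α)*η))*(α-β)) • (u - v) := by
      rw [mul_smul (e*((lam-α)*η)) (α-β), ← hTxy]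
      module
    rw [expand, hco]
    have h5 : z = (lam-α) • (u-v) + T x := sub_eq_iff_eq_add.1 key2
    have h6 : (lam-α) • (u-v) = ((lam-α)*e) • (u-v) + ((lam-α)*(1-e)) • (u-v) := by
      module
    rw [h5, h6, k3, add_zero]
    abel
  · rintro z ⟨γ, rfl⟩
    rw [huv]
    refine ⟨γ*α + (1-γ)*β, ?_⟩
    rw [hα, hβ]
    match_scalars <;> ring

end FTAG
end ModuleBasics
section Plane
open MeasureTheory L0
variable {Ω : Type*} [MeasurableSpace Ω] {P : Measure Ω}
variable {V V' : Type*} [AddCommGroup V] [Module (Ω →ₘ[P] ℝ) V]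
  [AddCommGroup V'] [Module (Ω →ₘ[P] ℝ) V']

namespace FTAG

lemma two_invertible : cst P (2⁻¹:ℝ) * (cst P 2) = 1 := by
  rw [← cst_mul, show (2⁻¹*2 : ℝ) = 1 by norm_num, cst_one]

lemma one_add_one_eq_cst_two : (1 + 1 : Ω →ₘ[P] ℝ) = cst P 2 := by
  rw [show (2:ℝ) = 1 + 1 by norm_num, cst_add, cst_one]

lemma Good.ray {T : V → V'} (hT : Good P T) (hT0 : T 0 = 0) (x : V) (lam : Ω →ₘ[P] ℝ) :
    ∃ γ : Ω →ₘ[P] ℝ, T (lam • x) = γ • T x := by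
  have hmem : lam • x ∈ line P x 0 := ⟨lam, by rw [smul_zero, add_zero]⟩
  have h2 := hT.lineMap hT0 x 0 ▸ Set.mem_image_of_mem T hmem
  obtain ⟨γ, hγ⟩ := h2
  exact ⟨γ, by rw [hγ, hT0, smul_zero, add_zero]⟩

lemma Good.ray_surj {T : V → V'} (hT : Good P T) (hT0 : T 0 = 0) (x : V) (γ : Ω →ₘ[P] ℝ) :
    ∃ lam : Ω →ₘ[P] ℝ, T (lam • x) = γ • T x := by
  have hmem : γ • T x ∈ line P (T x) (T 0) := by
    rw [hT0]
    exact ⟨γ, by rw [smul_zero, add_zero]⟩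
  rw [← hT.lineMap hT0 x 0] at hmem
  obtain ⟨w, ⟨lam, rfl⟩, h⟩ := hmem
  simp only [smul_zero, add_zero] at h
  exact ⟨lam, h⟩

lemma Good.plane {T : V → V'} (hT : Good P T) (hT0 : T 0 = 0) (x y : V) (a b : Ω →ₘ[P] ℝ) :
    ∃ c d : Ω →ₘ[P] ℝ, T (a • x + b • y) = c • T x + d • T y := by
  have hht : cst P (2⁻¹:ℝ) * cst P (2:ℝ) = 1 := two_invertible
  have htt : (cst P (2:ℝ)) = 1 + 1 := one_add_one_eq_cst_two.symm
  have h2 : (1 - cst P (2⁻¹:ℝ)) * cst P (2:ℝ) = 1 := by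
    linear_combination (-1:Ω →ₘ[P] ℝ)*hht + htt
  have hmem : a • x + b • y ∈ line P ((cst P (2:ℝ)*a) • x) ((cst P (2:ℝ)*b) • y) := by
    refine ⟨cst P (2⁻¹:ℝ), ?_⟩
    match_scalars
    · linear_combination (-a)*hht
    · linear_combination (-b)*h2
  have himg := (hT.lineMap hT0 _ _) ▸ Set.mem_image_of_mem T hmem
  obtain ⟨ρ, hρ⟩ := himg
  obtain ⟨γ₁, hγ₁⟩ := hT.ray hT0 x (cst P (2:ℝ)*a)
  obtain ⟨γ₂, hγ₂⟩ := hT.ray hT0 y (cst P (2:ℝ)*b)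
  refine ⟨ρ*γ₁, (1-ρ)*γ₂, ?_⟩
  rw [hρ, hγ₁, hγ₂, ← mul_smul, ← mul_smul]

/-- relative independence passes to the images. -/
lemma Good.coordUnique {T : V → V'} (hT : Good P T) (hT0 : T 0 = 0) {x y : V}
    {f : Ω →ₘ[P] ℝ} (hf : IsInd P f)
    (hind : ∀ ξ η : Ω →ₘ[P] ℝ, ξ • x + η • y = 0 → f*ξ = 0 ∧ f*η = 0)
    (ξ η : Ω →ₘ[P] ℝ) (h : ξ • T x + η • T y = 0) : f*ξ = 0 ∧ f*η = 0 := by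
  obtain ⟨D, hD, ξ₀, hξ₁, hξ₂⟩ := exists_supp ξ
  set e := ind P D hD with he
  have hee : IsInd P e := ⟨D, hD, rfl⟩
  -- step 1 : e • T x = (-(e*(ξ₀*η))) • T y
  have h4 : (ξ₀*ξ) • T x + (ξ₀*η) • T y = ξ₀ • (ξ • T x + η • T y) := by module
  rw [h, smul_zero] at h4
  have h5 : e • T x + (ξ₀*η) • T y = 0 := by
    rw [show e = ξ₀*ξ by linear_combination -hξ₁]
    exact h4
  have h1 : e • T x = (-(e*(ξ₀*η))) • T y := by
    have h6 : e • (e • T x + (ξ₀*η) • T y) = 0 := by rw [h5, smul_zero]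
    have h7 : e • (e • T x + (ξ₀*η) • T y) = e • T x - (-(e*(ξ₀*η))) • T y := by
      match_scalars
      · linear_combination hee.idem
      · ring
    rw [h7] at h6
    exact sub_eq_zero.1 h6
  -- step 2 : e • T (x+y) = ζ2 • T y
  obtain ⟨c₁, c₂, hs'⟩ := hT.plane hT0 x y 1 1
  have hs'' : T (x + y) = c₁ • T x + c₂ • T y := by
    rw [← hs', one_smul, one_smul]
  set ζ2 := c₁ * (-(e*(ξ₀*η))) + e*c₂ with hζ2
  have h8 : e • T (x+y) = ζ2 • T y := by
    rw [hs'']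
    have h9 : e • (c₁ • T x + c₂ • T y) = c₁ • (e • T x) + (e*c₂) • T y := by module
    rw [h9, h1, hζ2]
    module
  have hζ2e : e * ζ2 = ζ2 := by
    rw [hζ2]
    linear_combination (c₂ - c₁*(ξ₀*η))*hee.idem
  obtain ⟨B, hB, η₁, hB1, hB2⟩ := exists_supp (e - ζ2)
  set eB := ind P B hB with heB
  have heBB : IsInd P eB := ⟨B, hB, rfl⟩
  -- step 3 : f * (e * (1-eB)) = 0
  have hg : f * (e * (1 - eB)) = 0 := by
    have hgT : (e*(1-eB)) • T (x+y) = (e*(1-eB)) • T y := by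
      have h9 : (e*(1-eB)) • T (x+y) = (1-eB) • (e • T (x+y)) := by module
      have h10 : (1-eB)*ζ2 = (1-eB)*e := by linear_combination hB2
      rw [h9, h8, ← mul_smul, h10]
      module
    have hcanc := hT.cancel (hee.mul heBB.compl) hgT
    have hx0 : (e*(1-eB)) • x + (0:Ω →ₘ[P] ℝ) • y = 0 := by
      rw [smul_add] at hcanc
      have h11 := add_right_cancel (hcanc.trans (zero_add ((e*(1-eB)) • y)).symm)
      rw [zero_smul, add_zero, h11]
    exact (hind _ _ hx0).1
  -- step 4 : find a point killing f*e
  have hpt := smul_mem_line (-(ζ2*η₁)) (T y) (T (x+y))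
  rw [← hT.lineMap hT0 y (x+y)] at hpt
  obtain ⟨z₁, ⟨ρ, rfl⟩, hz₁⟩ := hpt
  have h11 : e • ((-(ζ2*η₁)) • T y + (1-(-(ζ2*η₁))) • T (x+y)) = (ζ2*(1-eB)) • T y := by
    have h12 : e • ((-(ζ2*η₁)) • T y + (1-(-(ζ2*η₁))) • T (x+y))
        = (e*(-(ζ2*η₁))) • T y + (1-(-(ζ2*η₁))) • (e • T (x+y)) := by module
    rw [h12, h8]
    have hco : e*(-(ζ2*η₁)) + (1-(-(ζ2*η₁)))*ζ2 = ζ2*(1-eB) := by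
      linear_combination (-ζ2)*hB1
    match_scalars
    linear_combination hco
  have hupt : (f*e) • T (ρ • y + (1-ρ) • (x+y)) = (f*e) • T 0 := by
    rw [hz₁, hT0, smul_zero, mul_smul, h11, ← mul_smul]
    have hkill : f*(ζ2*(1-eB)) = 0 := by
      linear_combination ζ2*hg - ((1-eB)*f)*hζ2e
    rw [hkill, zero_smul]
  have hcanc2 := hT.cancel (hf.mul hee) hupt
  rw [smul_zero] at hcanc2
  have h13 : ((1-ρ)*(f*e)) • x + (f*e) • y = (f*e) • (ρ • y + (1-ρ) • (x+y)) := by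
    module
  rw [hcanc2] at h13
  have hfe : f*e = 0 := by linear_combination (hind _ _ h13).2 - e*hf.idem
  have hfξ : f*ξ = 0 := by linear_combination ξ*hfe - f*hξ₂
  have hfη : f*η = 0 := by
    have h14 : f • (ξ • T x + η • T y) = (f*ξ) • T x + (f*η) • T y := by module
    rw [h, smul_zero, hfξ, zero_smul, zero_add] at h14
    have hθ : (f*η) • T y = 0 := h14.symm
    obtain ⟨H, hH, η₂, hH1, hH2⟩ := exists_supp (f*η)
    have h15 : ind P H hH • T y = 0 := by
      rw [← hH1, mul_comm, mul_smul, hθ, smul_zero]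
    have h16 : ind P H hH • T y = ind P H hH • T 0 := by rw [hT0, smul_zero, h15]
    have h17 := hT.cancel ⟨H, hH, rfl⟩ h16
    rw [smul_zero] at h17
    have h18 : (0:Ω →ₘ[P] ℝ) • x + ind P H hH • y = 0 := by
      rw [zero_smul, zero_add, h17]
    have h19 := (hind _ _ h18).2
    linear_combination η*h19 - hH2
  exact ⟨hfξ, hfη⟩

end FTAG
end Plane
section Parallel
open MeasureTheory L0
variable {Ω : Type*} [MeasurableSpace Ω] {P : Measure Ω}
variable {V V' : Type*} [AddCommGroup V] [Module (Ω →ₘ[P] ℝ) V]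
  [AddCommGroup V'] [Module (Ω →ₘ[P] ℝ) V']

namespace FTAG

/-- Preservation of parallels, relative to an idempotent `f`. -/
lemma Good.parallel {T : V → V'} (hT : Good P T) (hT0 : T 0 = 0) {x y : V}
    {f : Ω →ₘ[P] ℝ} (hf : IsInd P f)
    (pa pb qa qb va vb κ : Ω →ₘ[P] ℝ)
    (hvfree : ∀ ξ : Ω →ₘ[P] ℝ, ξ • (va • x + vb • y) = 0 → f*ξ = 0)
    (htrans : ∀ (u t : Ω →ₘ[P] ℝ), IsInd P u →
      u • ((qa • x + qb • y) - (pa • x + pb • y)) = (u*t) • (va • x + vb • y) → f*u = 0) :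
    ∃ ζ : Ω →ₘ[P] ℝ,
      f • (T ((qa • x + qb • y) + κ • (va • x + vb • y)) - T (qa • x + qb • y))
        = ζ • (f • (T ((pa • x + pb • y) + (va • x + vb • y)) - T (pa • x + pb • y))) := by
  set p := pa • x + pb • y with hpdef
  set q := qa • x + qb • y with hqdef
  set v := va • x + vb • y with hvdef
  obtain ⟨P1, P2, hP⟩ := hT.plane hT0 x y pa pb
  obtain ⟨Q1, Q2, hQ⟩ := hT.plane hT0 x y qa qb
  obtain ⟨Pv1, Pv2, hPv'⟩ := hT.plane hT0 x y (pa+va) (pb+vb)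
  obtain ⟨Qv1, Qv2, hQv'⟩ := hT.plane hT0 x y (qa+κ*va) (qb+κ*vb)
  have hP' : T p = P1 • T x + P2 • T y := by rw [hpdef]; exact hP
  have hQ' : T q = Q1 • T x + Q2 • T y := by rw [hqdef]; exact hQ
  have hPv : T (p + v) = Pv1 • T x + Pv2 • T y := by
    rw [show p + v = (pa+va) • x + (pb+vb) • y from by rw [hpdef, hvdef]; module]
    exact hPv'
  have hQv : T (q + κ • v) = Qv1 • T x + Qv2 • T y := by
    rw [show q + κ • v = (qa+κ*va) • x + (qb+κ*vb) • y from by rw [hqdef, hvdef]; module]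
    exact hQv'
  set a₁ := Pv1 - P1 with ha₁
  set b₁ := Pv2 - P2 with hb₁
  set a₂ := Qv1 - Q1 with ha₂
  set b₂ := Qv2 - Q2 with hb₂
  set ρ₁ := Q1 - P1 with hρ₁
  set ρ₂ := Q2 - P2 with hρ₂
  set Δ := a₁*b₂ - a₂*b₁ with hΔ
  obtain ⟨D, hD, Δ₀, hΔ1, hΔ2⟩ := exists_supp Δ
  set eD := ind P D hD with heD
  have heDD : IsInd P eD := ⟨D, hD, rfl⟩
  set t := Δ₀*(ρ₁*b₂ - ρ₂*a₂) with ht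
  set s := Δ₀*(ρ₁*b₁ - ρ₂*a₁) with hs
  have hpt1 := smul_mem_line t (T (p+v)) (T p)
  rw [← hT.lineMap hT0 (p+v) p] at hpt1
  obtain ⟨z₁, ⟨th, hth⟩, hz₁⟩ := hpt1
  have hpt2 := smul_mem_line s (T (q+κ•v)) (T q)
  rw [← hT.lineMap hT0 (q+κ•v) q] at hpt2
  obtain ⟨z₂, ⟨sh, hsh⟩, hz₂⟩ := hpt2
  -- the two realized points agree on f*eD
  have hEq : (f*eD) • T z₁ = (f*eD) • T z₂ := by
    have hdiff : T z₁ - T z₂ = (-ρ₁ + t*a₁ - s*a₂) • T x + (-ρ₂ + t*b₁ - s*b₂) • T y := by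
      rw [hz₁, hz₂, hP', hQ', hPv, hQv, hρ₁, hρ₂, ha₁, hb₁, ha₂, hb₂]
      module
    have hx0 : eD * (-ρ₁ + t*a₁ - s*a₂) = 0 := by
      rw [ht, hs]
      linear_combination (ρ₁*eD)*hΔ1 - (ρ₁*eD*Δ₀)*hΔ + ρ₁*heDD.idem
    have hy0 : eD * (-ρ₂ + t*b₁ - s*b₂) = 0 := by
      rw [ht, hs]
      linear_combination (ρ₂*eD)*hΔ1 - (ρ₂*eD*Δ₀)*hΔ + ρ₂*heDD.idem
    have h20 : (f*eD) • (T z₁ - T z₂) = 0 := by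
      rw [hdiff]
      have hgoal : (f*eD) • ((-ρ₁ + t*a₁ - s*a₂) • T x + (-ρ₂ + t*b₁ - s*b₂) • T y)
          = (f*(eD*(-ρ₁ + t*a₁ - s*a₂))) • T x + (f*(eD*(-ρ₂ + t*b₁ - s*b₂))) • T y := by
        module
      rw [hgoal, hx0, hy0]
      simp
    rw [smul_sub] at h20
    exact sub_eq_zero.1 h20
  have hcanc := hT.cancel (hf.mul heDD) hEq
  have hrel : (f*eD) • (q - p) = ((f*eD)*(th - sh*κ)) • v := by
    have h2 : (f*eD) • (th • (p+v) + (1-th) • p) = (f*eD) • (sh • (q+κ•v) + (1-sh) • q) := by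
      rw [← hth, ← hsh]
      exact hcanc
    have h3 : (f*eD) • (q - p) - ((f*eD)*(th - sh*κ)) • v
        = (f*eD) • (sh • (q+κ•v) + (1-sh) • q) - (f*eD) • (th • (p+v) + (1-th) • p) := by
      module
    rw [← h2, sub_self] at h3
    exact sub_eq_zero.1 h3
  have hfeD : f*eD = 0 := by
    have h4 := htrans (f*eD) (th - sh*κ) (hf.mul heDD) hrel
    linear_combination h4 - eD*hf.idem
  have hfΔ' : f*(a₁*b₂ - a₂*b₁) = 0 := by
    rw [← hΔ]
    linear_combination Δ*hfeD - f*hΔ2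
  have dfree : ∀ ξ : Ω →ₘ[P] ℝ, ξ • (T (p+v) - T p) = 0 → f*ξ = 0 := by
    intro ξ hξ
    obtain ⟨U, hU, ξ₀, hU1, hU2⟩ := exists_supp ξ
    have h6 : ind P U hU • (T (p+v) - T p) = 0 := by
      rw [show ind P U hU = ξ₀*ξ from by linear_combination -hU1, mul_smul, hξ, smul_zero]
    rw [smul_sub] at h6
    have h7 := hT.cancel ⟨U, hU, rfl⟩ (sub_eq_zero.1 h6)
    have h8 : ind P U hU • v = 0 := by
      have h9 : ind P U hU • (p + v) - ind P U hU • p = ind P U hU • v := by module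
      rw [h7, sub_self] at h9
      exact h9.symm
    have h10 := hvfree (ind P U hU) h8
    linear_combination ξ*h10 - f*hU2
  obtain ⟨Ea, hEa, a₀, hEa1, hEa2⟩ := exists_supp a₁
  set ea := ind P Ea hEa with hea
  obtain ⟨Eb, hEb, b₀, hEb1, hEb2⟩ := exists_supp b₁
  set eb := ind P Eb hEb with heb
  have hd1 : T (p+v) - T p = a₁ • T x + b₁ • T y := by
    rw [hPv, hP', ha₁, hb₁]
    module
  have hu' : f*((1-ea)*(1-eb)) = 0 := by
    apply dfree
    rw [hd1]
    have h11 : ((1-ea)*(1-eb)) • (a₁ • T x + b₁ • T y)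
        = ((1-eb)*((1-ea)*a₁)) • T x + ((1-ea)*((1-eb)*b₁)) • T y := by module
    rw [h11, show (1-ea)*a₁ = 0 from by linear_combination -hEa2,
      show (1-eb)*b₁ = 0 from by linear_combination -hEb2]
    simp
  have hu'' : f*((1-ea)*(eb*a₂)) = 0 := by
    linear_combination (-(f*(1-ea)*a₂))*hEb1 - (b₀*(1-ea))*hfΔ' - (b₀*b₂*f)*hEa2
  have hfa : f*a₂ = (a₀*a₂ + (1-ea)*(b₀*b₂))*(f*a₁) := by
    linear_combination hu'' + a₂*hu' - (f*a₂)*hEa1 + (b₀*b₂*f)*hEa2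
  have hfb : f*b₂ = (a₀*a₂ + (1-ea)*(b₀*b₂))*(f*b₁) := by
    linear_combination b₂*hu' - (f*b₂)*hEa1 + a₀*hfΔ' - (f*(1-ea)*b₂)*hEb1
  refine ⟨a₀*a₂ + (1-ea)*(b₀*b₂), ?_⟩
  have hd2 : T (q+κ•v) - T q = a₂ • T x + b₂ • T y := by
    rw [hQv, hQ', ha₂, hb₂]
    module
  rw [hd2, hd1]
  match_scalars
  · linear_combination hfa
  · linear_combination hfb

end FTAG
end Parallel
section RPT
open MeasureTheory L0
variable {Ω : Type*} [MeasurableSpace Ω] {P : Measure Ω}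
variable {V V' : Type*} [AddCommGroup V] [Module (Ω →ₘ[P] ℝ) V]
  [AddCommGroup V'] [Module (Ω →ₘ[P] ℝ) V']

namespace FTAG

lemma split_combine {g e : Ω →ₘ[P] ℝ} {a b : V'}
    (h1 : (g*e) • a = (g*e) • b) (h2 : (g*(1-e)) • a = (g*(1-e)) • b) : g • a = g • b := by
  calc g • a = (g*e) • a + (g*(1-e)) • a := by module
  _ = (g*e) • b + (g*(1-e)) • b := by rw [h1, h2]
  _ = g • b := by module

/-- The relative plane theorem: on the support of `f`, if `x, y` are
`f`-relatively independent, then `T` is `f`-relatively homogeneous along `x`. -/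
lemma Good.rpt {T : V → V'} (hT : Good P T) (hT0 : T 0 = 0) {x y : V}
    {f : Ω →ₘ[P] ℝ} (hf : IsInd P f)
    (hind : ∀ ξ η : Ω →ₘ[P] ℝ, ξ • x + η • y = 0 → f*ξ = 0 ∧ f*η = 0) :
    ∀ lam : Ω →ₘ[P] ℝ, f • T (lam • x) = (f*lam) • T x := by
  classical
  choose γ hγ using hT.ray hT0 x
  choose δ hδ using hT.ray hT0 y
  have hxann : ∀ ξ : Ω →ₘ[P] ℝ, ξ • T x = 0 → f*ξ = 0 := fun ξ h =>
    (hT.coordUnique hT0 hf hind ξ 0 (by rw [h, zero_smul, add_zero])).1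
  have hCU := hT.coordUnique hT0 hf hind
  -- locality of γ and δ
  have hlocal : ∀ (lam mu e : Ω →ₘ[P] ℝ), IsInd P e → e*lam = e*mu →
      f*(e*(γ lam - γ mu)) = 0 := by
    intro lam mu e he hemu
    have h1 : e • T (lam • x) = e • T (mu • x) := by
      rw [← hT.loc hT0 he, ← hT.loc hT0 he, ← mul_smul, ← mul_smul, hemu]
    rw [hγ lam, hγ mu, ← mul_smul, ← mul_smul] at h1
    have h2 : (e*(γ lam - γ mu)) • T x = 0 := by
      rw [show e*(γ lam - γ mu) = e*γ lam - e*γ mu from by ring, sub_smul, h1, sub_self]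
    exact hxann _ h2
  have hylocal : ∀ (lam mu e : Ω →ₘ[P] ℝ), IsInd P e → e*lam = e*mu →
      f*(e*(δ lam - δ mu)) = 0 := by
    intro lam mu e he hemu
    have h1 : e • T (lam • y) = e • T (mu • y) := by
      rw [← hT.loc hT0 he, ← hT.loc hT0 he, ← mul_smul, ← mul_smul, hemu]
    rw [hδ lam, hδ mu, ← mul_smul, ← mul_smul] at h1
    have h2 : (0:Ω →ₘ[P] ℝ) • T x + (e*(δ lam - δ mu)) • T y = 0 := by
      rw [show e*(δ lam - δ mu) = e*δ lam - e*δ mu from by ring, sub_smul, h1, sub_self,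
        zero_smul, zero_add]
    exact (hCU _ _ h2).2
  have hγ1 : f*(γ 1) = f := by
    have h1 : (γ 1 - 1) • T x = 0 := by
      rw [sub_smul, one_smul, ← hγ 1, one_smul, sub_self]
    linear_combination hxann _ h1
  have hγ0 : f*(γ 0) = 0 := by
    have h1 : (γ 0) • T x = 0 := by rw [← hγ 0, zero_smul, hT0]
    exact hxann _ h1
  have hδ1 : f*(δ 1) = f := by
    have h1 : (0:Ω →ₘ[P] ℝ) • T x + (δ 1 - 1) • T y = 0 := by
      rw [sub_smul, one_smul, ← hδ 1, one_smul, sub_self, zero_smul, zero_add]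
    linear_combination (hCU _ _ h1).2
  -- the region-vanishing lemma : off the support of lam, f*γ lam dies
  have hγoff : ∀ (lam e : Ω →ₘ[P] ℝ), IsInd P e → e*lam = 0 → f*(e*γ lam) = 0 := by
    intro lam e he h0
    have h1 := hlocal lam 0 e he (by rw [h0, mul_zero])
    linear_combination h1 + e*hγ0
  -- C1 : coordinates of T (lam•x + y)
  have hC1 : ∀ lam : Ω →ₘ[P] ℝ, f • T (lam • x + y) = (f*(γ lam)) • T x + f • T y := by
    intro lam
    obtain ⟨L, hL, lam₀, hL1, hL2⟩ := exists_supp lam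
    set e := ind P L hL with heL
    have hee : IsInd P e := ⟨L, hL, rfl⟩
    have hfe : IsInd P (f*e) := hf.mul hee
    -- PP app (A): p = 0, v = y, q = lam•x, κ = 1
    obtain ⟨ζ₁, hA⟩ := hT.parallel (x := x) (y := y) hT0 hfe 0 0 lam 0 0 1 1
      (by
        intro ξ hξ
        have hξ' : (0:Ω →ₘ[P] ℝ) • x + ξ • y = 0 := by
          rw [← hξ]; module
        have := (hind _ _ hξ').2
        linear_combination e*this)
      (by
        intro u t hu hrel
        have hrel' : (u*lam) • x + (-(u*t)) • y = 0 := by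
          rw [show (u*lam) • x + (-(u*t)) • y
            = u • ((lam • x + (0:Ω →ₘ[P] ℝ) • y) - ((0:Ω →ₘ[P] ℝ) • x + (0:Ω →ₘ[P] ℝ) • y))
              - (u*t) • ((0:Ω →ₘ[P] ℝ) • x + (1:Ω →ₘ[P] ℝ) • y) from by module, hrel,
            sub_self]
        have h1 := (hind _ _ hrel').1
        linear_combination lam₀*h1 - (f*u)*hL1)
    -- PP app (B): p = 0, v = lam•x, q = y, κ = 1
    obtain ⟨ζ₂, hB⟩ := hT.parallel (x := x) (y := y) hT0 hfe 0 0 0 1 lam 0 1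
      (by
        intro ξ hξ
        have hξ' : (ξ*lam) • x + (0:Ω →ₘ[P] ℝ) • y = 0 := by
          rw [show (ξ*lam) • x + (0:Ω →ₘ[P] ℝ) • y = ξ • (lam • x + (0:Ω →ₘ[P] ℝ) • y) from by
            module, hξ]
        have := (hind _ _ hξ').1
        linear_combination lam₀*this - (f*ξ)*hL1)
      (by
        intro u t hu hrel
        have hrel' : (-(u*t*lam)) • x + u • y = 0 := by
          rw [show (-(u*t*lam)) • x + u • y
            = u • (((0:Ω →ₘ[P] ℝ) • x + (1:Ω →ₘ[P] ℝ) • y) - ((0:Ω →ₘ[P] ℝ) • x + (0:Ω →ₘ[P] ℝ) • y))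
              - (u*t) • (lam • x + (0:Ω →ₘ[P] ℝ) • y) from by module, hrel, sub_self]
        have h1 := (hind _ _ hrel').2
        linear_combination e*h1)
    rw [show (lam • x + (0:Ω →ₘ[P] ℝ) • y) + (1:Ω →ₘ[P] ℝ) • ((0:Ω →ₘ[P] ℝ) • x + (1:Ω →ₘ[P] ℝ) • y)
        = lam • x + y from by module,
      show lam • x + (0:Ω →ₘ[P] ℝ) • y = lam • x from by module,
      show ((0:Ω →ₘ[P] ℝ) • x + (0:Ω →ₘ[P] ℝ) • y) + ((0:Ω →ₘ[P] ℝ) • x + (1:Ω →ₘ[P] ℝ) • y)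
        = y from by module,
      show (0:Ω →ₘ[P] ℝ) • x + (0:Ω →ₘ[P] ℝ) • y = (0:V) from by module,
      hT0, sub_zero] at hA
    rw [show ((0:Ω →ₘ[P] ℝ) • x + (1:Ω →ₘ[P] ℝ) • y) + (1:Ω →ₘ[P] ℝ) • (lam • x + (0:Ω →ₘ[P] ℝ) • y)
        = lam • x + y from by module,
      show (0:Ω →ₘ[P] ℝ) • x + (1:Ω →ₘ[P] ℝ) • y = y from by module,
      show ((0:Ω →ₘ[P] ℝ) • x + (0:Ω →ₘ[P] ℝ) • y) + (lam • x + (0:Ω →ₘ[P] ℝ) • y)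
        = lam • x from by module,
      show (0:Ω →ₘ[P] ℝ) • x + (0:Ω →ₘ[P] ℝ) • y = (0:V) from by module,
      hT0, sub_zero] at hB
    -- hA : (f*e) • (T (lam•x+y) - T (lam•x)) = ζ₁ • ((f*e) • T y)
    -- hB : (f*e) • (T (lam•x+y) - T y) = ζ₂ • ((f*e) • T (lam•x))
    rw [hγ lam] at hA hB
    -- coordinates comparison
    have hAB : ((f*e)*(γ lam) - ζ₂*((f*e)*(γ lam))) • T x + (ζ₁*(f*e) - (f*e)) • T y = 0 := by
      have e1 : ((f*e)*(γ lam) - ζ₂*((f*e)*(γ lam))) • T x + (ζ₁*(f*e) - (f*e)) • T y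
          = ((f*e) • (T (lam • x + y) - T y) - ζ₂ • ((f*e) • ((γ lam) • T x)))
            - ((f*e) • (T (lam • x + y) - (γ lam) • T x) - ζ₁ • ((f*e) • T y)) := by
        module
      rw [e1, hA, hB, sub_self, sub_self, sub_zero]
    have hζ₁ := (hCU _ _ hAB).2
    -- f*e part of the goal
    have hepart : (f*(f*e)) • T (lam • x + y) = (f*(f*e)) • ((γ lam) • T x + T y) := by
      have e2 : (f*(f*e)) • T (lam • x + y) - (f*(f*e)) • ((γ lam) • T x + T y)
          = f • ((f*e) • (T (lam • x + y) - (γ lam) • T x) - ζ₁ • ((f*e) • T y))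
            + (f*(ζ₁*(f*e) - (f*e))) • T y := by
        module
      rw [hA, sub_self, smul_zero, hζ₁, zero_smul, zero_add] at e2
      exact sub_eq_zero.1 e2
    have hepart' : (f*e) • T (lam • x + y) = (f*e) • ((γ lam) • T x + T y) := by
      have hffe : f*(f*e) = f*e := by linear_combination e*hf.idem
      rw [hffe] at hepart
      exact hepart
    -- (1-e) part
    have h1e : ((1:Ω →ₘ[P] ℝ)-e)*lam = 0 := by linear_combination -hL2
    have hoffpart : (f*(1-e)) • T (lam • x + y) = (f*(1-e)) • ((γ lam) • T x + T y) := by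
      have h3 : (1-e) • (lam • x + y) = (1-e) • y := by
        have h4 : (1-e) • (lam • x + y) = ((1-e)*lam) • x + (1-e) • y := by module
        rw [h4, h1e, zero_smul, zero_add]
      have h5 : (1-e) • T (lam • x + y) = (1-e) • T y := by
        rw [← hT.loc hT0 hee.compl, h3, hT.loc hT0 hee.compl]
      have h6 : f*((1-e)*γ lam) = 0 := hγoff lam (1-e) hee.compl h1e
      have e3 : (f*(1-e)) • T (lam • x + y) - (f*(1-e)) • ((γ lam) • T x + T y)
          = f • ((1-e) • T (lam • x + y) - (1-e) • T y) - (f*((1-e)*γ lam)) • T x := by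
        module
      rw [h5, sub_self, smul_zero, h6, zero_smul, sub_zero] at e3
      exact sub_eq_zero.1 e3
    have := split_combine hepart' hoffpart
    rw [this]
    module
  -- C2 : additivity of γ
  have hadd : ∀ lam mu : Ω →ₘ[P] ℝ, f*(γ (lam+mu)) = f*(γ lam + γ mu) := by
    intro lam mu
    obtain ⟨L, hL, lam₀, hL1, hL2⟩ := exists_supp lam
    set e := ind P L hL with heL
    have hee : IsInd P e := ⟨L, hL, rfl⟩
    have hfe : IsInd P (f*e) := hf.mul hee
    obtain ⟨ζ, hPP⟩ := hT.parallel (x := x) (y := y) hT0 hfe 0 1 lam 1 mu (-1) 1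
      (by
        intro ξ hξ
        have hξ' : (ξ*mu) • x + (-ξ) • y = 0 := by
          rw [show (ξ*mu) • x + (-ξ) • y = ξ • (mu • x + (-1:Ω →ₘ[P] ℝ) • y) from by module,
            hξ]
        have h2 := (hind _ _ hξ').2
        linear_combination (-e)*h2)
      (by
        intro u t hu hrel
        have hrel' : (u*lam - u*t*mu) • x + (u*t) • y = 0 := by
          rw [show (u*lam - u*t*mu) • x + (u*t) • y
            = u • ((lam • x + (1:Ω →ₘ[P] ℝ) • y) - ((0:Ω →ₘ[P] ℝ) • x + (1:Ω →ₘ[P] ℝ) • y))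
              - (u*t) • (mu • x + (-1:Ω →ₘ[P] ℝ) • y) from by module, hrel, sub_self]
        have hx1 := (hind _ _ hrel').1
        have hy1 := (hind _ _ hrel').2
        linear_combination lam₀*hx1 + (lam₀*mu)*hy1 - (f*u)*hL1)
    rw [show ((lam • x + (1:Ω →ₘ[P] ℝ) • y) + (1:Ω →ₘ[P] ℝ) • (mu • x + (-1:Ω →ₘ[P] ℝ) • y))
        = (lam+mu) • x from by module,
      show lam • x + (1:Ω →ₘ[P] ℝ) • y = lam • x + y from by module,
      show (((0:Ω →ₘ[P] ℝ) • x + (1:Ω →ₘ[P] ℝ) • y) + (mu • x + (-1:Ω →ₘ[P] ℝ) • y))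
        = mu • x from by module,
      show (0:Ω →ₘ[P] ℝ) • x + (1:Ω →ₘ[P] ℝ) • y = y from by module] at hPP
    rw [hγ (lam+mu), hγ mu] at hPP
    have hCe : (f*e) • T (lam • x + y) = ((f*e)*(γ lam)) • T x + (f*e) • T y := by
      calc (f*e) • T (lam • x + y) = e • (f • T (lam • x + y)) := by module
      _ = e • ((f*(γ lam)) • T x + f • T y) := by rw [hC1 lam]
      _ = ((f*e)*(γ lam)) • T x + (f*e) • T y := by module
    have hAB : ((f*e)*(γ (lam+mu)) - (f*e)*(γ lam) - ζ*((f*e)*(γ mu))) • T x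
        + (-(f*e) + ζ*(f*e)) • T y = 0 := by
      have e1 : ((f*e)*(γ (lam+mu)) - (f*e)*(γ lam) - ζ*((f*e)*(γ mu))) • T x
          + (-(f*e) + ζ*(f*e)) • T y
          = ((f*e) • ((γ (lam+mu)) • T x - T (lam • x + y))
              - ζ • ((f*e) • ((γ mu) • T x - T y)))
            + ((f*e) • T (lam • x + y) - (((f*e)*(γ lam)) • T x + (f*e) • T y)) := by
        module
      rw [e1, hPP, hCe, sub_self, sub_self, add_zero]
    have hX := (hCU _ _ hAB).1
    have hY := (hCU _ _ hAB).2
    have hepartScalar : f*(e*(γ (lam+mu) - γ lam - γ mu)) = 0 := by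
      linear_combination hX + (γ mu)*hY + (e*(γ mu) - e*(γ (lam+mu) - γ lam))*hf.idem
    have h1e : ((1:Ω →ₘ[P] ℝ)-e)*lam = 0 := by linear_combination -hL2
    have hreg : f*((1-e)*(γ (lam+mu) - γ mu)) = 0 :=
      hlocal (lam+mu) mu (1-e) hee.compl (by linear_combination -hL2)
    have hoff : f*((1-e)*γ lam) = 0 := hγoff lam (1-e) hee.compl h1e
    linear_combination hepartScalar + hreg - hoff
  -- C4 : γ and δ agree
  have hγδ : ∀ lam : Ω →ₘ[P] ℝ, f*(δ lam) = f*(γ lam) := by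
    intro lam
    obtain ⟨S, hS, mu₀, hS1, hS2⟩ := exists_supp (lam - 1)
    set es := ind P S hS with heS
    have hess : IsInd P es := ⟨S, hS, rfl⟩
    have hfes : IsInd P (f*es) := hf.mul hess
    obtain ⟨ζ, hPP⟩ := hT.parallel (x := x) (y := y) hT0 hfes 0 1 lam 0 1 (-1) (-lam)
      (by
        intro ξ hξ
        have hξ' : ξ • x + (-ξ) • y = 0 := by
          rw [show ξ • x + (-ξ) • y = ξ • ((1:Ω →ₘ[P] ℝ) • x + (-1:Ω →ₘ[P] ℝ) • y) from by
            module, hξ]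
        have h2 := (hind _ _ hξ').1
        linear_combination es*h2)
      (by
        intro u t hu hrel
        have hrel' : (u*lam - u*t) • x + (u*t - u) • y = 0 := by
          rw [show (u*lam - u*t) • x + (u*t - u) • y
            = u • ((lam • x + (0:Ω →ₘ[P] ℝ) • y) - ((0:Ω →ₘ[P] ℝ) • x + (1:Ω →ₘ[P] ℝ) • y))
              - (u*t) • ((1:Ω →ₘ[P] ℝ) • x + (-1:Ω →ₘ[P] ℝ) • y) from by module, hrel,
            sub_self]
        have hx2 := (hind _ _ hrel').1
        have hy2 := (hind _ _ hrel').2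
        linear_combination mu₀*hx2 + mu₀*hy2 - (f*u)*hS1)
    rw [show ((lam • x + (0:Ω →ₘ[P] ℝ) • y) + (-lam) • ((1:Ω →ₘ[P] ℝ) • x + (-1:Ω →ₘ[P] ℝ) • y))
        = lam • y from by module,
      show lam • x + (0:Ω →ₘ[P] ℝ) • y = lam • x from by module,
      show (((0:Ω →ₘ[P] ℝ) • x + (1:Ω →ₘ[P] ℝ) • y) + ((1:Ω →ₘ[P] ℝ) • x + (-1:Ω →ₘ[P] ℝ) • y))
        = x from by module,
      show (0:Ω →ₘ[P] ℝ) • x + (1:Ω →ₘ[P] ℝ) • y = y from by module] at hPP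
    rw [hγ lam, hδ lam] at hPP
    have hAB : (-((f*es)*(γ lam)) - ζ*(f*es)) • T x
        + ((f*es)*(δ lam) + ζ*(f*es)) • T y = 0 := by
      have e1 : (-((f*es)*(γ lam)) - ζ*(f*es)) • T x + ((f*es)*(δ lam) + ζ*(f*es)) • T y
          = ((f*es) • ((δ lam) • T y - (γ lam) • T x) - ζ • ((f*es) • (T x - T y))) := by
        module
      rw [e1, hPP, sub_self]
    have hX := (hCU _ _ hAB).1
    have hY := (hCU _ _ hAB).2
    have hespart : f*(es*(δ lam - γ lam)) = 0 := by
      linear_combination hX + hY - (es*(δ lam - γ lam))*hf.idem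
    have honones : ((1:Ω →ₘ[P] ℝ)-es)*lam = (1-es)*1 := by linear_combination -hS2
    have hregγ := hlocal lam 1 (1-es) hess.compl honones
    have hregδ := hylocal lam 1 (1-es) hess.compl honones
    linear_combination hespart + hregδ - hregγ + (1-es)*hδ1 - (1-es)*hγ1
  -- C3 : multiplicativity of γ
  have hmulγ : ∀ lam mu : Ω →ₘ[P] ℝ, f*(γ (mu*lam)) = f*(γ lam * γ mu) := by
    intro lam mu
    obtain ⟨L, hL, lam₀, hL1, hL2⟩ := exists_supp lam
    set e := ind P L hL with heL
    have hee : IsInd P e := ⟨L, hL, rfl⟩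
    obtain ⟨S, hS, mu₀, hS1, hS2⟩ := exists_supp (mu - 1)
    set es := ind P S hS with heS
    have hess : IsInd P es := ⟨S, hS, rfl⟩
    have hfee : IsInd P (f*(e*es)) := hf.mul (hee.mul hess)
    obtain ⟨ζ, hPP⟩ := hT.parallel (x := x) (y := y) hT0 hfee 0 1 0 mu lam (-1) mu
      (by
        intro ξ hξ
        have hξ' : (ξ*lam) • x + (-ξ) • y = 0 := by
          rw [show (ξ*lam) • x + (-ξ) • y = ξ • (lam • x + (-1:Ω →ₘ[P] ℝ) • y) from by
            module, hξ]
        have h2 := (hind _ _ hξ').2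
        linear_combination (-(e*es))*h2)
      (by
        intro u t hu hrel
        have hrel' : (u*t*lam) • x + (u - u*t - u*mu) • y = 0 := by
          rw [show (u*t*lam) • x + (u - u*t - u*mu) • y
            = (u*t) • (lam • x + (-1:Ω →ₘ[P] ℝ) • y)
              - u • (((0:Ω →ₘ[P] ℝ) • x + mu • y) - ((0:Ω →ₘ[P] ℝ) • x + (1:Ω →ₘ[P] ℝ) • y))
            from by module, hrel, sub_self]
        have hx3 := (hind _ _ hrel').1
        have hy3 := (hind _ _ hrel').2
        linear_combination (-(mu₀*e))*hy3 - (mu₀*lam₀)*hx3 + (mu₀*f*u*t)*hL1 - (f*e*u)*hS1)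
    rw [show (((0:Ω →ₘ[P] ℝ) • x + mu • y) + mu • (lam • x + (-1:Ω →ₘ[P] ℝ) • y))
        = (mu*lam) • x from by module,
      show ((0:Ω →ₘ[P] ℝ) • x + mu • y) = mu • y from by module,
      show (((0:Ω →ₘ[P] ℝ) • x + (1:Ω →ₘ[P] ℝ) • y) + (lam • x + (-1:Ω →ₘ[P] ℝ) • y))
        = lam • x from by module,
      show (0:Ω →ₘ[P] ℝ) • x + (1:Ω →ₘ[P] ℝ) • y = y from by module] at hPP
    rw [hγ (mu*lam), hδ mu, hγ lam] at hPP
    have hAB : ((f*(e*es))*(γ (mu*lam)) - ζ*((f*(e*es))*(γ lam))) • T x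
        + (-((f*(e*es))*(δ mu)) + ζ*(f*(e*es))) • T y = 0 := by
      have e1 : ((f*(e*es))*(γ (mu*lam)) - ζ*((f*(e*es))*(γ lam))) • T x
          + (-((f*(e*es))*(δ mu)) + ζ*(f*(e*es))) • T y
          = ((f*(e*es)) • ((γ (mu*lam)) • T x - (δ mu) • T y)
              - ζ • ((f*(e*es)) • ((γ lam) • T x - T y))) := by
        module
      rw [e1, hPP, sub_self]
    have hX := (hCU _ _ hAB).1
    have hY := (hCU _ _ hAB).2
    have hepart : f*((e*es)*(γ (mu*lam) - γ lam * γ mu)) = 0 := by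
      linear_combination hX + (γ lam)*hY + (f*(e*es)*(γ lam))*(hγδ mu)
        + ((e*es)*(γ lam * γ mu) - (e*es)*(γ (mu*lam)))*hf.idem
    have h1e : ((1:Ω →ₘ[P] ℝ)-e)*lam = 0 := by linear_combination -hL2
    have R1 : f*((1-e)*γ (mu*lam)) = 0 :=
      hγoff (mu*lam) (1-e) hee.compl (by linear_combination (-mu)*hL2)
    have R2 : f*((1-e)*γ lam) = 0 := hγoff lam (1-e) hee.compl h1e
    have R3 : f*((e*(1-es))*(γ (mu*lam) - γ lam)) = 0 :=
      hlocal (mu*lam) lam (e*(1-es)) (hee.mul hess.compl)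
        (by linear_combination (-(e*lam))*hS2)
    have R4 : f*((1-es)*(γ mu - γ 1)) = 0 :=
      hlocal mu 1 (1-es) hess.compl (by linear_combination -hS2)
    linear_combination hepart + R1 - (γ mu)*R2 + R3 - (e*(γ lam))*R4 - (e*(γ lam)*(1-es))*hγ1
  -- conclude via keyR
  have hfid : f*f = f := hf.idem
  obtain ⟨C0, hC0, hfeq⟩ := hf
  have hkey := keyR C0 hC0 (fun a => f * γ a)
    (fun a => by rw [← hfeq]; linear_combination (-(γ a))*hfid)
    (fun a b => by linear_combination hadd a b)
    (fun a b => by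
      linear_combination hmulγ b a - (γ a * γ b)*hfid)
    (by simpa [← hfeq] using hγ1)
    (fun A hA a => by
      have hl := hlocal (ind P A hA * a) a (ind P A hA) ⟨A, hA, rfl⟩
        (by linear_combination a*(ind_idem A hA))
      have hoff2 := hγoff (ind P A hA * a) (1 - ind P A hA) (IsInd.compl ⟨A, hA, rfl⟩)
        (by linear_combination (-a)*(ind_idem A hA))
      linear_combination hl + hoff2)
  intro lam
  have hfin := hkey lam
  rw [hγ lam, ← mul_smul, hfin, ← hfeq]

end FTAG
end RPT
section Master
open MeasureTheory L0
open scoped ENNReal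
variable {Ω : Type*} [MeasurableSpace Ω] {P : Measure Ω}
variable {V V' : Type*} [AddCommGroup V] [Module (Ω →ₘ[P] ℝ) V]
  [AddCommGroup V'] [Module (Ω →ₘ[P] ℝ) V']

namespace FTAG

lemma ind_congr {A B : Set Ω} (hA : MeasurableSet A) (hB : MeasurableSet B) (h : A = B) :
    ind P A hA = ind P B hB := by subst h; rfl

lemma ind_inter_empty {A B : Set Ω} (hA : MeasurableSet A) (hB : MeasurableSet B)
    (h : A ∩ B = ∅) : ind P A hA * ind P B hB = 0 := by
  rw [ind_mul, ind_congr (hA.inter hB) MeasurableSet.empty h, ind_empty]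

lemma ind_subset_mul {A B : Set Ω} (hA : MeasurableSet A) (hB : MeasurableSet B)
    (h : A ⊆ B) : ind P A hA * ind P B hB = ind P A hA := by
  rw [ind_mul]
  exact ind_congr (hA.inter hB) hA (Set.inter_eq_self_of_subset_left h)

/-- glue countably many elements of `L⁰` along a disjoint family. -/
lemma glue (B : ℕ → Set Ω) (hB : ∀ n, MeasurableSet (B n))
    (hdisj : ∀ m n, m ≠ n → B m ∩ B n = ∅) (τ : ℕ → Ω →ₘ[P] ℝ) :
    ∃ τs : Ω →ₘ[P] ℝ, ∀ n, ind P (B n) (hB n) * τs = ind P (B n) (hB n) * τ n := by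
  classical
  set g : Ω → ℝ := fun ω => if h : ∃ n, ω ∈ B n then ⇑(τ (Nat.find h)) ω else 0 with hgdef
  have hmem : ∀ (ω : Ω) (n : ℕ), ω ∈ B n → g ω = ⇑(τ n) ω := by
    intro ω n hω
    have hex : ∃ m, ω ∈ B m := ⟨n, hω⟩
    have hfind : Nat.find hex = n := by
      by_contra hne
      have h1 := Nat.find_spec hex
      have h2 := hdisj _ _ hne
      rw [Set.eq_empty_iff_forall_notMem] at h2
      exact h2 ω ⟨h1, hω⟩
    rw [hgdef]
    simp only [dif_pos hex, hfind]
  have hnomem : ∀ ω : Ω, (∀ n, ω ∉ B n) → g ω = 0 := by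
    intro ω hω
    have hne : ¬ ∃ n, ω ∈ B n := by
      rintro ⟨n, hn⟩
      exact hω n hn
    rw [hgdef]
    simp only [dif_neg hne]
  have hgm : Measurable g := by
    have hval : ∀ ω, Filter.Tendsto
        (fun N => ∑ n ∈ Finset.range N, (B n).indicator ⇑(τ n) ω)
        Filter.atTop (nhds (g ω)) := by
      intro ω
      by_cases hex : ∃ n, ω ∈ B n
      · obtain ⟨n, hn⟩ := hex
        apply tendsto_atTop_of_eventually_const (i₀ := n+1)
        intro N hN
        rw [Finset.sum_eq_single n]
        · rw [Set.indicator_of_mem hn, hmem ω n hn]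
        · intro m _ hmn
          apply Set.indicator_of_notMem
          intro hm
          have h2 := hdisj m n hmn
          rw [Set.eq_empty_iff_forall_notMem] at h2
          exact h2 ω ⟨hm, hn⟩
        · intro hnN
          exact absurd (Finset.mem_range.2 (by omega)) hnN
      · push_neg at hex
        rw [hnomem ω hex]
        apply tendsto_atTop_of_eventually_const (i₀ := 0)
        intro N _
        apply Finset.sum_eq_zero
        intro m _
        exact Set.indicator_of_notMem (hex m) _
    exact measurable_of_tendsto_metrizable
      (fun N => Finset.measurable_sum _ (fun n _ => ((τ n).measurable.indicator (hB n))))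
      (tendsto_pi_nhds.2 hval)
  refine ⟨AEEqFun.mk g hgm.aestronglyMeasurable, ?_⟩
  intro n
  conv_rhs => rw [← AEEqFun.mk_coeFn (τ n)]
  rw [ind_eq_mk, AEEqFun.mk_mul_mk, AEEqFun.mk_mul_mk]
  apply AEEqFun.mk_eq_mk.2
  apply Filter.Eventually.of_forall
  intro ω
  rw [Pi.mul_apply, Pi.mul_apply]
  by_cases hω : ω ∈ B n
  · rw [Set.indicator_of_mem hω, hmem ω n hω]
  · rw [Set.indicator_of_notMem hω, zero_mul, zero_mul]

/-- the master homogeneity lemma. -/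
lemma master [IsProbabilityMeasure P] (hV : IsRegular P V) {T : V → V'} (hT : Good P T) (hT0 : T 0 = 0)
    {a b : V} (hab : Indep P a b) :
    ∀ (w : V) (lam : Ω →ₘ[P] ℝ), T (lam • w) = lam • T w := by
  intro w lam
  classical
  set Q : Set Ω → Prop := fun A =>
    ∃ (hA : MeasurableSet A) (τ : Ω →ₘ[P] ℝ), ind P A hA • w = (ind P A hA * τ) • a with hQdef
  have hQempty : Q ∅ := ⟨MeasurableSet.empty, 0, by rw [ind_empty]; simp⟩
  have hQdown : ∀ A B : Set Ω, Q A → B ⊆ A → MeasurableSet B → Q B := by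
    rintro A B ⟨hA, τ, hτ⟩ hBA hB
    refine ⟨hB, τ, ?_⟩
    have h1 : ind P B hB = ind P B hB * ind P A hA := (ind_subset_mul hB hA hBA).symm
    calc ind P B hB • w = ind P B hB • (ind P A hA • w) := by rw [← mul_smul, ← h1]
    _ = ind P B hB • ((ind P A hA * τ) • a) := by rw [hτ]
    _ = (ind P B hB * τ) • a := by
          rw [← mul_smul,
            show ind P B hB * (ind P A hA * τ) = (ind P B hB * ind P A hA) * τ from by ring,
            ← h1]
  have hQunion : ∀ (A : ℕ → Set Ω), (∀ n, Q (A n)) → Q (⋃ n, A n) := by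
    intro A hQA
    have hAm : ∀ n, MeasurableSet (A n) := fun n => (hQA n).1
    set B : ℕ → Set Ω := fun n => disjointed A n with hBdef
    have hBm : ∀ n, MeasurableSet (B n) := MeasurableSet.disjointed hAm
    have hBdisj : ∀ m n, m ≠ n → B m ∩ B n = ∅ := fun m n hmn =>
      Set.disjoint_iff_inter_eq_empty.1 (disjoint_disjointed A hmn)
    have hBsubU : ∀ n, B n ⊆ ⋃ k, A k := fun n =>
      (disjointed_subset A n).trans (Set.subset_iUnion A n)
    have hQB : ∀ n, Q (B n) := fun n =>
      hQdown (A n) (B n) (hQA n) (disjointed_subset A n) (hBm n)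
    choose hBm' τn hτn using hQB
    obtain ⟨τs, hτs⟩ := glue B hBm' hBdisj τn
    have hUm : MeasurableSet (⋃ n, A n) := MeasurableSet.iUnion hAm
    refine ⟨hUm, τs, ?_⟩
    apply hV
    refine ⟨fun n => Nat.casesOn n (⋃ k, A k)ᶜ B,
      fun n => Nat.casesOn n hUm.compl hBm', ?_, ?_, ?_⟩
    · intro m n hmn
      match m, n with
      | 0, 0 => exact absurd rfl hmn
      | 0, k+1 =>
        apply Set.eq_empty_iff_forall_notMem.2
        rintro ω ⟨h1, h2⟩
        exact h1 (hBsubU k h2)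
      | j+1, 0 =>
        apply Set.eq_empty_iff_forall_notMem.2
        rintro ω ⟨h1, h2⟩
        exact h2 (hBsubU j h1)
      | j+1, k+1 => exact hBdisj j k (by omega)
    · apply Set.eq_univ_of_forall
      intro ω
      rw [Set.mem_iUnion]
      by_cases hω : ω ∈ ⋃ k, A k
      · have h1 : ω ∈ ⋃ k, B k := by
          rw [hBdef]
          rw [iUnion_disjointed]
          exact hω
        obtain ⟨k, hk⟩ := Set.mem_iUnion.1 h1
        exact ⟨k+1, hk⟩
      · exact ⟨0, hω⟩
    · intro n
      match n with
      | 0 =>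
        have h1 : ind P (⋃ k, A k)ᶜ hUm.compl * ind P (⋃ k, A k) hUm = 0 :=
          ind_inter_empty _ _ (Set.compl_inter_self _)
        exact (by
          rw [← mul_smul, h1, zero_smul,
            show ind P (⋃ k, A k)ᶜ hUm.compl • ((ind P (⋃ k, A k) hUm * τs) • a)
              = ((ind P (⋃ k, A k)ᶜ hUm.compl * ind P (⋃ k, A k) hUm) * τs) • a from by
                rw [← mul_smul, mul_assoc],
            h1, zero_mul, zero_smul] :
          ind P (⋃ k, A k)ᶜ hUm.compl • (ind P (⋃ n, A n) hUm • w)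
            = ind P (⋃ k, A k)ᶜ hUm.compl • ((ind P (⋃ n, A n) hUm * τs) • a))
      | k+1 =>
        have hsub : ind P (B k) (hBm' k) * ind P (⋃ j, A j) hUm = ind P (B k) (hBm' k) :=
          ind_subset_mul _ _ (hBsubU k)
        exact (by
          calc ind P (B k) (hBm' k) • (ind P (⋃ j, A j) hUm • w)
              = ind P (B k) (hBm' k) • w := by rw [← mul_smul, hsub]
          _ = (ind P (B k) (hBm' k) * τn k) • a := hτn k
          _ = (ind P (B k) (hBm' k) * τs) • a := by rw [hτs k]
          _ = ind P (B k) (hBm' k) • ((ind P (⋃ j, A j) hUm * τs) • a) := by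
              rw [← mul_smul, show ind P (B k) (hBm' k) * (ind P (⋃ j, A j) hUm * τs)
                = (ind P (B k) (hBm' k) * ind P (⋃ j, A j) hUm) * τs from by ring, hsub] :
          ind P (B k) (hBm' k) • (ind P (⋃ n, A n) hUm • w)
            = ind P (B k) (hBm' k) • ((ind P (⋃ n, A n) hUm * τs) • a))
  -- the maximal element of Q
  set r : ℝ≥0∞ := ⨆ (A : Set Ω) (_ : Q A), P A with hrdef
  have hrle : ∀ A, Q A → P A ≤ r := by
    intro A hQA
    have h1 : P A ≤ ⨆ (_ : Q A), P A := le_iSup (fun _ : Q A => P A) hQA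
    exact h1.trans (le_iSup (fun A => ⨆ (_ : Q A), P A) A)
  have hrtop : r ≠ ⊤ := by
    have h1 : r ≤ 1 := by
      apply iSup_le
      intro A
      apply iSup_le
      intro _
      exact prob_le_one
    intro h
    rw [h] at h1
    exact absurd h1 (by simp)
  have hseq : ∀ n : ℕ, ∃ A, Q A ∧ r ≤ P A + ((n:ℝ≥0∞)+1)⁻¹ := by
    intro n
    by_cases h0 : r ≤ ((n:ℝ≥0∞)+1)⁻¹
    · exact ⟨∅, hQempty, le_trans h0 (by simp)⟩
    · push_neg at h0
      have hinvne : ((n:ℝ≥0∞)+1)⁻¹ ≠ 0 :=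
        ENNReal.inv_ne_zero.2
          (ENNReal.add_lt_top.2 ⟨ENNReal.natCast_lt_top n, ENNReal.one_lt_top⟩).ne
      have hrne : r ≠ 0 := (lt_of_le_of_lt zero_le h0).ne'
      have h2 : r - ((n:ℝ≥0∞)+1)⁻¹ < r := ENNReal.sub_lt_self hrtop hrne hinvne
      rw [hrdef] at h2
      obtain ⟨A, hA2⟩ := lt_iSup_iff.1 h2
      obtain ⟨hQA, hA3⟩ := lt_iSup_iff.1 hA2
      exact ⟨A, hQA, tsub_le_iff_right.1 hA3.le⟩
  choose As hAsQ hAsle using hseq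
  set Astar := ⋃ n, As n with hAstarDef
  have hQstar : Q Astar := hQunion As hAsQ
  obtain ⟨hAsm, τ, hτ⟩ := hQstar
  have hPstar : ∀ n : ℕ, r ≤ P Astar + ((n:ℝ≥0∞)+1)⁻¹ := fun n =>
    le_trans (hAsle n) (add_le_add_left (measure_mono (Set.subset_iUnion As n)) _)
  have hnull : ∀ B, Q B → P (B \ Astar) = 0 := by
    intro B hQB
    obtain ⟨hBm, _, _⟩ := id hQB
    have hQu : Q (Astar ∪ B) := by
      have h1 := hQunion (fun n => Nat.casesOn n B As)
        (fun n => Nat.casesOn n hQB hAsQ)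
      have heq : (⋃ n, (fun n => Nat.casesOn n B As : ℕ → Set Ω) n) = Astar ∪ B := by
        apply Set.eq_of_subset_of_subset
        · intro ω hω
          obtain ⟨n, hn⟩ := Set.mem_iUnion.1 hω
          match n with
          | 0 => exact Or.inr hn
          | k+1 => exact Or.inl (Set.mem_iUnion.2 ⟨k, hn⟩)
        · intro ω hω
          rcases hω with hω | hω
          · obtain ⟨k, hk⟩ := Set.mem_iUnion.1 hω
            exact Set.mem_iUnion.2 ⟨k+1, hk⟩
          · exact Set.mem_iUnion.2 ⟨0, hω⟩
      rwa [heq] at h1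
    have hle := hrle _ hQu
    have hsplit : P (Astar ∪ B) = P Astar + P (B \ Astar) := by
      rw [← Set.union_diff_self]
      exact measure_union disjoint_sdiff_self_right (hBm.diff hAsm)
    have hcancel : ∀ n:ℕ, P (B \ Astar) ≤ ((n:ℝ≥0∞)+1)⁻¹ := by
      intro n
      have h3 : P Astar + P (B \ Astar) ≤ P Astar + ((n:ℝ≥0∞)+1)⁻¹ :=
        le_trans (le_trans (le_of_eq hsplit.symm) hle) (hPstar n)
      exact (ENNReal.add_le_add_iff_left (measure_ne_top P Astar)).1 h3
    by_contra hne
    obtain ⟨n, hn⟩ := ENNReal.exists_inv_nat_lt hne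
    have h5 : ((n:ℝ≥0∞)+1)⁻¹ ≤ ((n:ℝ≥0∞))⁻¹ := by
      apply ENNReal.inv_le_inv.2
      exact le_self_add
    exact absurd (lt_of_le_of_lt (le_trans (hcancel n) h5) hn) (lt_irrefl _)
  -- relative independence of (w, a) off Astar
  set f := ind P Astarᶜ hAsm.compl with hfdef
  have hfInd : IsInd P f := ⟨Astarᶜ, hAsm.compl, rfl⟩
  have hindwa : ∀ ξ η : Ω →ₘ[P] ℝ, ξ • w + η • a = 0 → f*ξ = 0 ∧ f*η = 0 := by
    intro ξ η h
    obtain ⟨D, hD, ξ₀, h1, h2⟩ := exists_supp ξ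
    have h3 : ind P D hD • w = (ind P D hD * (-(ξ₀*η))) • a := by
      have h4 : (ξ₀*ξ) • w + (ξ₀*η) • a = ξ₀ • (ξ • w + η • a) := by module
      rw [h, smul_zero] at h4
      have h5 : ind P D hD • w + (ξ₀*η) • a = 0 := by
        rw [show ind P D hD = ξ₀*ξ from by linear_combination -h1]
        exact h4
      have h6 : ind P D hD • (ind P D hD • w + (ξ₀*η) • a) = 0 := by rw [h5, smul_zero]
      have h7 : ind P D hD • (ind P D hD • w + (ξ₀*η) • a)
          = ind P D hD • w - (ind P D hD * (-(ξ₀*η))) • a := by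
        match_scalars
        · linear_combination ind_idem D hD
        · ring
      rw [h7] at h6
      exact sub_eq_zero.1 h6
    have hQD : Q D := ⟨hD, -(ξ₀*η), h3⟩
    have hnullD := hnull D hQD
    have hfD : f * ind P D hD = 0 := by
      rw [hfdef, ind_mul]
      apply ind_null
      rwa [show Astarᶜ ∩ D = D \ Astar from by rw [Set.diff_eq, Set.inter_comm]]
    have hfξ : f*ξ = 0 := by linear_combination ξ*hfD - f*h2
    refine ⟨hfξ, ?_⟩
    have h8 : (f*ξ) • w + (f*η) • a = 0 := by
      rw [show (f*ξ) • w + (f*η) • a = f • (ξ • w + η • a) from by module, h, smul_zero]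
    rw [hfξ, zero_smul, zero_add] at h8
    have h9 : (f*η) • a + (0:Ω →ₘ[P] ℝ) • b = 0 := by
      rw [zero_smul, add_zero]
      exact h8
    exact (hab _ _ h9).1
  have hRPTwa := hT.rpt hT0 (x := w) (y := a) hfInd hindwa
  have hind1 : ∀ ξ η : Ω →ₘ[P] ℝ, ξ • a + η • b = 0 →
      (1:Ω →ₘ[P] ℝ)*ξ = 0 ∧ (1:Ω →ₘ[P] ℝ)*η = 0 := by
    intro ξ η h
    obtain ⟨h1, h2⟩ := hab ξ η h
    exact ⟨by rw [h1, mul_zero], by rw [h2, mul_zero]⟩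
  have hRPTab := hT.rpt hT0 (x := a) (y := b) IsInd.one hind1
  set e := ind P Astar hAsm with hedef
  have heInd : IsInd P e := ⟨Astar, hAsm, rfl⟩
  have hstep : ∀ mu : Ω →ₘ[P] ℝ, T (mu • a) = mu • T a := by
    intro mu
    have h1 := hRPTab mu
    rwa [one_smul, one_mul] at h1
  have hepart : e • T (lam • w) = e • (lam • T w) := by
    calc e • T (lam • w) = T (e • (lam • w)) := (hT.loc hT0 heInd _).symm
    _ = T ((lam*(e*τ)) • a) := by
        rw [show e • (lam • w) = lam • (e • w) from by module, hτ,
          show lam • ((e*τ) • a) = (lam*(e*τ)) • a from by module]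
    _ = (lam*(e*τ)) • T a := hstep _
    _ = lam • ((e*τ) • T a) := by module
    _ = lam • T ((e*τ) • a) := by rw [hstep]
    _ = lam • T (e • w) := by rw [← hτ]
    _ = lam • (e • T w) := by rw [hT.loc hT0 heInd]
    _ = e • (lam • T w) := by module
  have hfpart : f • T (lam • w) = f • (lam • T w) := by
    rw [hRPTwa lam]
    module
  have hcompl : f = 1 - e := by rw [hfdef, hedef, ind_compl_eq]
  have h1 : ((1:Ω →ₘ[P] ℝ)*e) • T (lam • w) = ((1:Ω →ₘ[P] ℝ)*e) • (lam • T w) := by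
    rw [one_mul]
    exact hepart
  have h2 : ((1:Ω →ₘ[P] ℝ)*(1-e)) • T (lam • w) = ((1:Ω →ₘ[P] ℝ)*(1-e)) • (lam • T w) := by
    rw [one_mul, ← hcompl]
    exact hfpart
  have h3 := split_combine h1 h2
  rwa [one_smul, one_smul] at h3

end FTAG
end Master
section Final
open MeasureTheory L0
variable {Ω : Type*} [MeasurableSpace Ω] {P : Measure Ω}
variable {V V' : Type*} [AddCommGroup V] [Module (Ω →ₘ[P] ℝ) V]
  [AddCommGroup V'] [Module (Ω →ₘ[P] ℝ) V']

namespace FTAG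

lemma line_add (x y c : V) : (fun z => z + c) '' line P x y = line P (x+c) (y+c) := by
  apply Set.eq_of_subset_of_subset
  · rintro z ⟨w, ⟨lam, rfl⟩, rfl⟩
    exact ⟨lam, by module⟩
  · rintro z ⟨lam, rfl⟩
    exact ⟨lam • x + (1-lam) • y, ⟨lam, rfl⟩, by module⟩

lemma line_sub (u v : V') (d : V') : (fun z => z - d) '' line P u v = line P (u-d) (v-d) := by
  apply Set.eq_of_subset_of_subset
  · rintro z ⟨w, ⟨lam, rfl⟩, rfl⟩
    exact ⟨lam, by module⟩
  · rintro z ⟨lam, rfl⟩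
    exact ⟨lam • u + (1-lam) • v, ⟨lam, rfl⟩, by module⟩

lemma Good.translate {T : V → V'} (hT : Good P T) (c : V) :
    Good P (fun z => T (z + c) - T c) := by
  constructor
  · intro x y A hA
    have hac := ind_add_compl (P := P) A hA
    have h1 : ind P A hA • x + ind P Aᶜ hA.compl • y + c
        = ind P A hA • (x+c) + ind P Aᶜ hA.compl • (y+c) := by
      rw [show ind P A hA • (x+c) + ind P Aᶜ hA.compl • (y+c)
        = ind P A hA • x + ind P Aᶜ hA.compl • y
          + (ind P A hA + ind P Aᶜ hA.compl) • c from by module, hac, one_smul]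
    simp only
    rw [h1, hT.stable (x+c) (y+c) A hA,
      show ind P A hA • (T (x+c) - T c) + ind P Aᶜ hA.compl • (T (y+c) - T c)
        = ind P A hA • T (x+c) + ind P Aᶜ hA.compl • T (y+c)
          - (ind P A hA + ind P Aᶜ hA.compl) • T c from by module, hac, one_smul]
  · intro z1 z2 h
    simp only at h
    have h2 : T (z1 + c) = T (z2 + c) := sub_left_inj.1 h
    exact add_right_cancel (hT.inj h2)
  · intro x y
    obtain ⟨u, v, huv⟩ := hT.lines (x+c) (y+c)
    refine ⟨u - T c, v - T c, ?_⟩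
    have hcomp : (fun z => T (z + c) - T c)
        = (fun w => w - T c) ∘ T ∘ (fun z => z + c) := rfl
    rw [hcomp, Set.image_comp, Set.image_comp, line_add, huv, line_sub]

end FTAG
end Final

open MeasureTheory FTAG in
theorem stmt1' {Ω : Type*} [MeasurableSpace Ω] (P : Measure Ω) [IsProbabilityMeasure P]
    {V V' : Type*} [AddCommGroup V] [Module (Ω →ₘ[P] ℝ) V]
    [AddCommGroup V'] [Module (Ω →ₘ[P] ℝ) V']
    (hV : L0.IsRegular P V) (hV' : L0.IsRegular P V')
    (hfree : ∃ x y : V, L0.Indep P x y)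
    (T : V → V') (hstable : L0.IsStable P T) (hinj : Function.Injective T)
    (hline : ∀ x y : V, ∃ u v : V', T '' L0.line P x y = L0.line P u v) :
    L0.IsL0Affine P T := by
  obtain ⟨a, b, hab⟩ := hfree
  have hG0 : Good P T := ⟨hstable, hinj, hline⟩
  have hGT' : Good P (fun z => T z - T 0) := by
    have heq : (fun z => T z - T 0) = (fun z => T (z + 0) - T 0) := by
      funext z
      rw [add_zero]
    rw [heq]
    exact hG0.translate 0
  have hT0 : (fun z => T z - T 0) 0 = 0 := by simp
  have hom := FTAG.master hV hGT' hT0 hab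
  have main : ∀ (x y : V) (lam : Ω →ₘ[P] ℝ),
      (fun z => T z - T 0) (lam • x + (1-lam) • y)
        = lam • (fun z => T z - T 0) x + (1-lam) • (fun z => T z - T 0) y := by
    intro x y lam
    have hU : Good P (fun z => (fun z' => T z' - T 0) (z + y) - (fun z' => T z' - T 0) y) :=
      hGT'.translate y
    have hU0 : (fun z => (fun z' => T z' - T 0) (z + y) - (fun z' => T z' - T 0) y) 0 = 0 := by
      simp
    have hm := FTAG.master hV hU hU0 hab (x - y) lam
    simp only at hm ⊢
    rw [show lam • (x - y) + y = lam • x + (1-lam) • y from by module,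
      show x - y + y = x from by abel] at hm
    have h3 : T (lam • x + (1-lam) • y) - T 0
        = ((T (lam • x + (1-lam) • y) - T 0) - (T y - T 0)) + (T y - T 0) := by abel
    rw [h3, hm]
    module
  have hadd : ∀ x y : V, (fun z => T z - T 0) (x + y)
      = (fun z => T z - T 0) x + (fun z => T z - T 0) y := by
    intro x y
    have hht : cst P (2⁻¹:ℝ) * cst P (2:ℝ) = 1 := two_invertible
    have htt : (cst P (2:ℝ)) = 1 + 1 := one_add_one_eq_cst_two.symm
    have h2 : (1 - cst P (2⁻¹:ℝ)) * cst P (2:ℝ) = 1 := by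
      linear_combination (-1:Ω →ₘ[P] ℝ)*hht + htt
    have hmain := main (cst P (2:ℝ) • x) (cst P (2:ℝ) • y) (cst P (2⁻¹:ℝ))
    simp only at hmain ⊢
    have eV1 : ∀ w : V, cst P (2⁻¹:ℝ) • (cst P (2:ℝ) • w) = w := fun w => by
      rw [← mul_smul, hht, one_smul]
    have eV2 : ∀ w : V, (1 - cst P (2⁻¹:ℝ)) • (cst P (2:ℝ) • w) = w := fun w => by
      rw [← mul_smul, h2, one_smul]
    have eW1 : ∀ w : V', cst P (2⁻¹:ℝ) • (cst P (2:ℝ) • w) = w := fun w => by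
      rw [← mul_smul, hht, one_smul]
    have eW2 : ∀ w : V', (1 - cst P (2⁻¹:ℝ)) • (cst P (2:ℝ) • w) = w := fun w => by
      rw [← mul_smul, h2, one_smul]
    rw [eV1 x, eV2 y] at hmain
    have homx := hom x (cst P (2:ℝ))
    have homy := hom y (cst P (2:ℝ))
    rw [homx, homy] at hmain
    rw [hmain, eW1 (T x - T 0), eW2 (T y - T 0)]
  have hsmul : ∀ (c : Ω →ₘ[P] ℝ) (z : V), T (c • z) - T 0 = c • (T z - T 0) :=
    fun c z => hom z c
  let S : V →ₗ[Ω →ₘ[P] ℝ] V' :=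
    { toFun := fun z => T z - T 0
      map_add' := hadd
      map_smul' := fun c z => by simpa using hsmul c z }
  exact ⟨S, T 0, fun z => by show T z = (T z - T 0) + T 0; abel⟩


/-- If `V, V'` are regular `L⁰(𝓕)`-modules, `V` contains two `L⁰(𝓕)`-independent
elements, and `T : V → V'` is stable, injective and maps each `L⁰`-line to an
`L⁰`-line, then `T` is `L⁰`-affine. -/
theorem stmt1 {Ω : Type*} [MeasurableSpace Ω] (P : Measure Ω) [IsProbabilityMeasure P]
    {V V' : Type*} [AddCommGroup V] [Module (Ω →ₘ[P] ℝ) V]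
    [AddCommGroup V'] [Module (Ω →ₘ[P] ℝ) V']
    (hV : L0.IsRegular P V) (hV' : L0.IsRegular P V')
    (hfree : ∃ x y : V, L0.Indep P x y)
    (T : V → V') (hstable : L0.IsStable P T) (hinj : Function.Injective T)
    (hline : ∀ x y : V, ∃ u v : V', T '' L0.line P x y = L0.line P u v) :
    L0.IsL0Affine P T := by
  exact stmt1' P hV hV' hfree T hstable hinj hline
end

section
/- Let V and V′ be two regular L⁰(𝓕)-modules such that V contains an element e with full support. If T : V → V′ is bijective, stable, and maps each L⁰-line segment to an L⁰-line segment, then T maps each L⁰-line to an L⁰-line. -/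
open MeasureTheory

namespace Aux
open L0

variable {Ω : Type*} [MeasurableSpace Ω] {P : Measure Ω}

lemma cF_mul (f g : Ω →ₘ[P] ℝ) : ⇑(f * g) =ᵐ[P] ⇑f * ⇑g := AEEqFun.coeFn_mul f g
lemma cF_add (f g : Ω →ₘ[P] ℝ) : ⇑(f + g) =ᵐ[P] ⇑f + ⇑g := AEEqFun.coeFn_add f g
lemma cF_sub (f g : Ω →ₘ[P] ℝ) : ⇑(f - g) =ᵐ[P] ⇑f - ⇑g := AEEqFun.coeFn_sub f g
lemma cF_one : ⇑(1 : Ω →ₘ[P] ℝ) =ᵐ[P] 1 := AEEqFun.coeFn_one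
lemma cF_zero : ⇑(0 : Ω →ₘ[P] ℝ) =ᵐ[P] 0 := AEEqFun.coeFn_zero
lemma le_iff {f g : Ω →ₘ[P] ℝ} : f ≤ g ↔ ∀ᵐ ω ∂P, f ω ≤ g ω := AEEqFun.coeFn_le.symm

lemma ind_coe (A : Set Ω) (hA : MeasurableSet A) :
    ⇑(ind P A hA) =ᵐ[P] A.indicator (fun _ => (1:ℝ)) := AEEqFun.coeFn_mk _ _

/-- `cRH P : ℝ →+* L⁰` the constants. -/
noncomputable def cRH (P : Measure Ω) : ℝ →+* (Ω →ₘ[P] ℝ) where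
  toFun r := AEEqFun.const Ω r
  map_one' := by
    apply AEEqFun.ext
    filter_upwards [AEEqFun.coeFn_const (μ := P) Ω (1:ℝ), cF_one (P := P)] with ω h1 h2
    simp [h1, h2]
  map_mul' r s := by
    apply AEEqFun.ext
    filter_upwards [AEEqFun.coeFn_const (μ := P) Ω (r*s), cF_mul (AEEqFun.const Ω r) (AEEqFun.const Ω s),
      AEEqFun.coeFn_const (μ := P) Ω r, AEEqFun.coeFn_const (μ := P) Ω s] with ω h1 h2 h3 h4
    simp [h1, h2, h3, h4]
  map_zero' := by
    apply AEEqFun.ext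
    filter_upwards [AEEqFun.coeFn_const (μ := P) Ω (0:ℝ), cF_zero (P := P)] with ω h1 h2
    simp [h1, h2]
  map_add' r s := by
    apply AEEqFun.ext
    filter_upwards [AEEqFun.coeFn_const (μ := P) Ω (r+s), cF_add (AEEqFun.const Ω r) (AEEqFun.const Ω s),
      AEEqFun.coeFn_const (μ := P) Ω r, AEEqFun.coeFn_const (μ := P) Ω s] with ω h1 h2 h3 h4
    simp [h1, h2, h3, h4]

lemma cF_cRH (r : ℝ) : ⇑(cRH P r) =ᵐ[P] fun _ => r := AEEqFun.coeFn_const _ _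

lemma ind_idem (A : Set Ω) (hA : MeasurableSet A) :
    ind P A hA * ind P A hA = ind P A hA := by
  apply AEEqFun.ext
  filter_upwards [cF_mul (ind P A hA) (ind P A hA), ind_coe A hA] with ω h1 h2
  rw [h1]; simp only [Pi.mul_apply, h2]
  by_cases hω : ω ∈ A <;> simp [hω]

lemma ind_compl (A : Set Ω) (hA : MeasurableSet A) :
    ind P Aᶜ hA.compl = 1 - ind P A hA := by
  apply AEEqFun.ext
  filter_upwards [ind_coe Aᶜ hA.compl, cF_sub (1 : Ω →ₘ[P] ℝ) (ind P A hA),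
    cF_one (P := P), ind_coe A hA] with ω h1 h2 h3 h4
  rw [h1, h2]; simp only [Pi.sub_apply, h3, h4, Pi.one_apply]
  by_cases hω : ω ∈ A <;> simp [hω]

lemma ind_mul_compl (A : Set Ω) (hA : MeasurableSet A) :
    ind P A hA * ind P Aᶜ hA.compl = 0 := by
  rw [ind_compl A hA]
  have h2 := ind_idem (P := P) A hA
  linear_combination -h2

section Module

variable {W W' : Type*} [AddCommGroup W] [Module (Ω →ₘ[P] ℝ) W]
  [AddCommGroup W'] [Module (Ω →ₘ[P] ℝ) W']

lemma split_parts (A : Set Ω) (hA : MeasurableSet A) (w : W) :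
    ind P A hA • w + ind P Aᶜ hA.compl • w = w := by
  rw [ind_compl A hA, ← add_smul]
  have : ind P A hA + (1 - ind P A hA) = 1 := by ring
  rw [this, one_smul]

lemma eq_of_parts (A : Set Ω) (hA : MeasurableSet A) {a b : W}
    (h1 : ind P A hA • a = ind P A hA • b)
    (h2 : ind P Aᶜ hA.compl • a = ind P Aᶜ hA.compl • b) : a = b := by
  rw [← split_parts (P := P) A hA a, h1, h2, split_parts (P := P) A hA b]

/-- locality of a stable map -/
lemma loc {T : W → W'} (hst : IsStable P T) (A : Set Ω) (hA : MeasurableSet A) {a b : W}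
    (h : ind P A hA • a = ind P A hA • b) :
    ind P A hA • T a = ind P A hA • T b := by
  have key := hst a b A hA
  have hw : ind P A hA • a + ind P Aᶜ hA.compl • b = b := by rw [h]; exact split_parts A hA b
  rw [hw] at key
  have := congrArg (fun z => ind P A hA • z) key
  simp only [smul_add, smul_smul, ind_idem] at this
  rw [ind_mul_compl, zero_smul, add_zero] at this
  exact this.symm

lemma loc_inv {T : W → W'} (hst : IsStable P T) (hinj : Function.Injective T)
    (A : Set Ω) (hA : MeasurableSet A) {a b : W}
    (h : ind P A hA • T a = ind P A hA • T b) :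
    ind P A hA • a = ind P A hA • b := by
  have key := hst a b A hA
  rw [h, split_parts A hA (T b)] at key
  have := hinj key
  have := congrArg (fun z => ind P A hA • z) this
  simp only [smul_add, smul_smul, ind_idem] at this
  rw [ind_mul_compl, zero_smul, add_zero] at this
  exact this

lemma mem_line_iff {x y z : W} : z ∈ line P x y ↔ ∃ lam : Ω →ₘ[P] ℝ, z = lam • x + (1 - lam) • y :=
  Iff.rfl

lemma left_mem_line (x y : W) : x ∈ line P x y :=
  ⟨1, by rw [sub_self, zero_smul, add_zero, one_smul]⟩

lemma right_mem_line (x y : W) : y ∈ line P x y :=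
  ⟨0, by rw [sub_zero, zero_smul, one_smul, zero_add]⟩

lemma combo_repr (α β μ u v : Ω →ₘ[P] ℝ) (x y : W) :
    μ • (α • x + (1-α) • y) + (1-μ) • (β • x + (1-β) • y)
      = (μ*α + (1-μ)*β) • x + (1 - (μ*α + (1-μ)*β)) • y := by
  match_scalars <;> ring

lemma combo_mem_line {u v a b : W} (ha : a ∈ line P u v) (hb : b ∈ line P u v)
    (μ : Ω →ₘ[P] ℝ) : μ • a + (1-μ) • b ∈ line P u v := by
  obtain ⟨α, rfl⟩ := ha
  obtain ⟨β, rfl⟩ := hb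
  exact ⟨_, combo_repr α β μ 0 0 u v⟩

lemma line_subset_line {u v a b : W} (ha : a ∈ line P u v) (hb : b ∈ line P u v) :
    line P a b ⊆ line P u v := by
  rintro z ⟨μ, rfl⟩
  exact combo_mem_line ha hb μ

lemma seg_subset_line {u v a b : W} (ha : a ∈ line P u v) (hb : b ∈ line P u v) :
    seg P a b ⊆ line P u v := by
  rintro z ⟨μ, _, _, rfl⟩
  exact combo_mem_line ha hb μ

end Module

end Aux

namespace Part2
open L0 Aux

variable {Ω : Type*} [MeasurableSpace Ω] {P : Measure Ω}
variable {W W' : Type*} [AddCommGroup W] [Module (Ω →ₘ[P] ℝ) W]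
  [AddCommGroup W'] [Module (Ω →ₘ[P] ℝ) W']

lemma half_mul_two : (cRH P (2⁻¹ : ℝ)) * 2 = 1 := by
  have h2 : (2 : Ω →ₘ[P] ℝ) = cRH P 2 := (map_ofNat (cRH P) 2).symm
  rw [h2, ← map_mul]
  norm_num

lemma two_smul_cancel {w : W} (h : (2 : Ω →ₘ[P] ℝ) • w = 0) : w = 0 := by
  have : w = (cRH P (2⁻¹ : ℝ)) • ((2 : Ω →ₘ[P] ℝ) • w) := by
    rw [smul_smul, half_mul_two, one_smul]
  rw [this, h, smul_zero]

lemma reflT {T : W → W'} (hst : IsStable P T) (hinj : Function.Injective T)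
    (hseg : ∀ x y : W, x ≠ y → T '' seg P x y = seg P (T x) (T y))
    {u v : W} (huv : u ≠ v) :
    T ((2 : Ω →ₘ[P] ℝ) • u - v) ∈ line P (T u) (T v) := by
  set R := Ω →ₘ[P] ℝ
  set a : W := (2 : R) • u - v with ha
  -- v ≠ a
  have hva : v ≠ a := by
    intro h
    apply huv
    have h0 : (2 : R) • (u - v) = 0 := by
      have : (2 : R) • (u - v) = a - v := by rw [ha]; match_scalars <;> ring
      rw [this, ← h, sub_self]
    have := two_smul_cancel h0
    rwa [sub_eq_zero] at this
  -- u ∈ seg v a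
  have humem : u ∈ seg P v a := by
    refine ⟨cRH P (2⁻¹ : ℝ), ?_, ?_, ?_⟩
    · rw [← AEEqFun.coeFn_le]
      filter_upwards [cF_zero (P := P), cF_cRH (P := P) (2⁻¹ : ℝ)] with ω h1 h2
      rw [h1, h2]; norm_num
    · rw [← AEEqFun.coeFn_le]
      filter_upwards [cF_one (P := P), cF_cRH (P := P) (2⁻¹ : ℝ)] with ω h1 h2
      rw [h1, h2]; norm_num
    · have h2 := half_mul_two (P := P)
      rw [ha]
      match_scalars
      · linear_combination h2
      · linear_combination -h2
  have hTu : T u ∈ seg P (T v) (T a) := by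
    rw [← hseg v a hva]; exact ⟨u, humem, rfl⟩
  obtain ⟨lam, -, -, hTu⟩ := hTu
  -- the set N where lam = 1
  set N : Set Ω := ⇑lam ⁻¹' {1} with hNdef
  have hN : MeasurableSet N := (AEEqFun.measurable lam) (measurableSet_singleton (1:ℝ))
  set iN : R := ind P N hN with hiNdef
  set iC : R := ind P Nᶜ hN.compl with hiCdef
  have hiC : iC = 1 - iN := ind_compl N hN
  have fact1 : iN * lam = iN := by
    apply AEEqFun.ext
    filter_upwards [cF_mul iN lam, ind_coe (P := P) N hN] with ω h1 h2
    rw [h1, Pi.mul_apply, h2]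
    by_cases hω : ω ∈ N
    · have : ⇑lam ω = 1 := hω
      simp [hω, this]
    · simp [hω]
  have fact2 : iN • T u = iN • T v := by
    rw [hTu, smul_add, smul_smul, smul_smul, fact1]
    have hz : iN * (1 - lam) = 0 := by linear_combination -fact1
    rw [hz, zero_smul, add_zero]
  have fact3 : iN • u = iN • v := loc_inv hst hinj N hN fact2
  have fact4 : iN • a = iN • u := by
    calc iN • a = (iN * 2) • u - iN • v := by rw [ha, smul_sub, smul_smul]
      _ = (iN * 2) • u - iN • u := by rw [fact3]
      _ = iN • u := by rw [← sub_smul]; congr 1; ring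
  have fact5 : iN • T a = iN • T u := loc hst N hN fact4
  -- the inverse scalar
  have hmeas : Measurable (fun ω => if ⇑lam ω = 1 then (1:ℝ) else (1 - ⇑lam ω)⁻¹) := by
    exact Measurable.ite hN measurable_const ((measurable_const.sub (AEEqFun.measurable lam)).inv)
  set ξ : R := AEEqFun.mk _ hmeas.aestronglyMeasurable with hξdef
  have f1 : iN * ξ = iN := by
    apply AEEqFun.ext
    filter_upwards [cF_mul iN ξ, ind_coe (P := P) N hN, AEEqFun.coeFn_mk _ hmeas.aestronglyMeasurable]
      with ω h1 h2 h3
    rw [h1, Pi.mul_apply, h2, h3]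
    by_cases hω : ω ∈ N
    · have : ⇑lam ω = 1 := hω
      simp [hω, this]
    · simp [hω]
  have f2 : ξ * (1 - lam) = iC := by
    apply AEEqFun.ext
    filter_upwards [cF_mul ξ (1 - lam), ind_coe (P := P) Nᶜ hN.compl,
      AEEqFun.coeFn_mk _ hmeas.aestronglyMeasurable, cF_sub (1 : R) lam, cF_one (P := P)]
      with ω h1 h2 h3 h4 h5
    rw [h1, Pi.mul_apply, h2, h3, h4, Pi.sub_apply, h5, Pi.one_apply]
    by_cases hω : ω ∈ N
    · have : ⇑lam ω = 1 := hω
      simp [hω, this]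
    · have hne : ⇑lam ω ≠ 1 := hω
      have : (1:ℝ) - ⇑lam ω ≠ 0 := sub_ne_zero.mpr (Ne.symm hne)
      simp [hne, hω, inv_mul_cancel₀ this]
  refine ⟨ξ, ?_⟩
  apply eq_of_parts (P := P) N hN
  · -- on N
    rw [smul_add, smul_smul, smul_smul, f1, fact5]
    have hz : iN * (1 - ξ) = 0 := by linear_combination -f1
    rw [hz, zero_smul, add_zero]
  · -- on Nᶜ
    have hξlam : ξ * lam = ξ - iC := by linear_combination -f2
    have h5 : ξ • T u = (ξ - iC) • T v + iC • T a := by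
      rw [hTu, smul_add, smul_smul, smul_smul, hξlam, f2]
    have hTa : iC • T a = ξ • T u - (ξ - iC) • T v := by rw [h5]; abel
    have key : (iN * ξ) • T u = (iN * ξ) • T v := by rw [mul_comm, mul_smul, mul_smul, fact2]
    rw [smul_add, smul_smul, smul_smul, hTa]
    calc ξ • T u - (ξ - iC) • T v
        = (iC * ξ) • T u + (iC * (1 - ξ)) • T v + ((iN * ξ) • T u - (iN * ξ) • T v) := by
          rw [hiC]; match_scalars <;> ring
      _ = (iC * ξ) • T u + (iC * (1 - ξ)) • T v := by rw [key, sub_self, add_zero]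

end Part2

namespace Part3
open L0 Aux Part2

variable {Ω : Type*} [MeasurableSpace Ω] {P : Measure Ω}
variable {W W' : Type*} [AddCommGroup W] [Module (Ω →ₘ[P] ℝ) W]
  [AddCommGroup W'] [Module (Ω →ₘ[P] ℝ) W']

lemma qrefl_repr (c : Ω →ₘ[P] ℝ) (x y : W) :
    (2 : Ω →ₘ[P] ℝ) • (c • x + (1-c) • y) - ((c-1) • x + (1-(c-1)) • y)
      = (c+1) • x + (1-(c+1)) • y := by match_scalars <;> ring

lemma qrefl_repr' (c : Ω →ₘ[P] ℝ) (x y : W) :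
    (2 : Ω →ₘ[P] ℝ) • (c • x + (1-c) • y) - ((c+1) • x + (1-(c+1)) • y)
      = (c-1) • x + (1-(c-1)) • y := by match_scalars <;> ring

lemma qdiff_repr (c : Ω →ₘ[P] ℝ) (x y : W) :
    ((c+1) • x + (1-(c+1)) • y) - (c • x + (1-c) • y) = x - y := by
  match_scalars <;> ring

lemma zk_repr (a l : Ω →ₘ[P] ℝ) (x y : W) :
    (l - a) • ((a+1) • x + (1-(a+1)) • y) + (1 - (l - a)) • (a • x + (1-a) • y)
      = l • x + (1-l) • y := by match_scalars <;> ring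

lemma ind_smul_aff {i l l' : Ω →ₘ[P] ℝ} (h : i * l = i * l') (x y : W) :
    i • (l • x + (1-l) • y) = i • (l' • x + (1-l') • y) := by
  have h2 : i * (1 - l) = i * (1 - l') := by linear_combination -h
  rw [smul_add, smul_add, smul_smul, smul_smul, smul_smul, smul_smul, h, h2]

/-- integer points of the line map into the image line -/
lemma int_points {T : W → W'} (hst : IsStable P T) (hinj : Function.Injective T)
    (hseg : ∀ x y : W, x ≠ y → T '' seg P x y = seg P (T x) (T y))
    {x y : W} (hxy : x ≠ y) (t : ℤ) :
    T (cRH P (t : ℝ) • x + (1 - cRH P (t : ℝ)) • y) ∈ line P (T x) (T y) := by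
  set q : ℝ → W := fun r => cRH P r • x + (1 - cRH P r) • y with hq
  show T (q t) ∈ line P (T x) (T y)
  have q0 : q 0 = y := by
    simp only [hq, map_zero, zero_smul, sub_zero, one_smul, zero_add]
  have q1 : q 1 = x := by
    simp only [hq, map_one, one_smul, sub_self, zero_smul, add_zero]
  have qne : ∀ r : ℝ, q (r+1) ≠ q r := by
    intro r h
    apply hxy
    have hd : q (r+1) - q r = x - y := by
      simp only [hq, map_add, map_one]
      exact qdiff_repr (cRH P r) x y
    rw [h, sub_self] at hd
    rw [← sub_eq_zero, ← hd]
  have qup : ∀ r : ℝ, (2 : Ω →ₘ[P] ℝ) • q (r+1) - q r = q (r+2) := by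
    intro r
    have h1 : cRH P (r+1) - 1 = cRH P r := by rw [map_add, map_one]; ring
    have h2 : cRH P (r+1) + 1 = cRH P (r+2) := by
      rw [map_add, map_add, map_one, map_ofNat]; ring
    calc (2 : Ω →ₘ[P] ℝ) • q (r+1) - q r
        = (2 : Ω →ₘ[P] ℝ) • (cRH P (r+1) • x + (1 - cRH P (r+1)) • y)
          - ((cRH P (r+1) - 1) • x + (1 - (cRH P (r+1) - 1)) • y) := by rw [h1]
      _ = (cRH P (r+1) + 1) • x + (1 - (cRH P (r+1) + 1)) • y := qrefl_repr _ x y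
      _ = q (r+2) := by rw [h2]
  have qdown : ∀ r : ℝ, (2 : Ω →ₘ[P] ℝ) • q r - q (r+1) = q (r-1) := by
    intro r
    have h1 : cRH P r + 1 = cRH P (r+1) := by rw [map_add, map_one]
    have h2 : cRH P r - 1 = cRH P (r-1) := by rw [map_sub, map_one]
    calc (2 : Ω →ₘ[P] ℝ) • q r - q (r+1)
        = (2 : Ω →ₘ[P] ℝ) • (cRH P r • x + (1 - cRH P r) • y)
          - ((cRH P r + 1) • x + (1 - (cRH P r + 1)) • y) := by rw [h1]
      _ = (cRH P r - 1) • x + (1 - (cRH P r - 1)) • y := qrefl_repr' _ x y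
      _ = q (r-1) := by rw [h2]
  -- induction
  have main : ∀ t : ℤ, T (q t) ∈ line P (T x) (T y) ∧ T (q ((t:ℝ)+1)) ∈ line P (T x) (T y) := by
    intro t
    induction t using Int.induction_on with
    | zero =>
      constructor
      · rw [show ((0:ℤ):ℝ) = 0 by norm_num, q0]; exact right_mem_line _ _
      · rw [show ((0:ℤ):ℝ) + 1 = 1 by norm_num, q1]; exact left_mem_line _ _
    | succ i ih =>
      push_cast at ih ⊢
      refine ⟨ih.2, ?_⟩
      have hmem := reflT hst hinj hseg (qne (i : ℝ))
      rw [qup (i : ℝ)] at hmem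
      have hsub := line_subset_line (P := P) ih.2 ih.1
      have he : ((i:ℝ) + 1 + 1) = (i:ℝ) + 2 := by ring
      rw [he]
      exact hsub hmem
    | pred i ih =>
      push_cast at ih ⊢
      constructor
      · have hmem := reflT hst hinj hseg (Ne.symm (qne (-(i:ℝ))))
        rw [qdown (-(i:ℝ))] at hmem
        have hsub := line_subset_line (P := P) ih.1 ih.2
        have he : (-(i:ℝ) - 1) = -(i:ℝ) - 1 := rfl
        exact hsub hmem
      · have he : (-(i:ℝ) - 1 + 1) = -(i:ℝ) := by ring
        rw [he]
        exact ih.1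
  exact (main t).1

lemma lineSub (hW' : IsRegular P W') {T : W → W'} (hst : IsStable P T)
    (hinj : Function.Injective T)
    (hseg : ∀ x y : W, x ≠ y → T '' seg P x y = seg P (T x) (T y))
    {x y : W} (hxy : x ≠ y) :
    T '' line P x y ⊆ line P (T x) (T y) := by
  rintro _ ⟨z, ⟨lam, rfl⟩, rfl⟩
  show T (lam • x + (1 - lam) • y) ∈ line P (T x) (T y)
  have hf : Measurable (⇑lam) := AEEqFun.measurable lam
  set A : ℤ → Set Ω := fun k => (fun ω => ⌊⇑lam ω⌋) ⁻¹' {k} with hAdef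
  have hA : ∀ k, MeasurableSet (A k) := fun k => hf.floor (measurableSet_singleton k)
  -- truncations
  have hmeasl : ∀ k : ℤ, Measurable (fun ω => max (k:ℝ) (min (⇑lam ω) ((k:ℝ)+1))) :=
    fun k => measurable_const.max (hf.min measurable_const)
  set lamk : ℤ → (Ω →ₘ[P] ℝ) := fun k => AEEqFun.mk _ (hmeasl k).aestronglyMeasurable with hlamk
  have hcoelamk : ∀ k : ℤ, ⇑(lamk k) =ᵐ[P] fun ω => max (k:ℝ) (min (⇑lam ω) ((k:ℝ)+1)) :=
    fun k => AEEqFun.coeFn_mk _ _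
  set zk : ℤ → W := fun k => lamk k • x + (1 - lamk k) • y with hzk
  -- zk k lies in the segment between consecutive integer points
  set p : ℤ → W := fun t => cRH P (t : ℝ) • x + (1 - cRH P (t : ℝ)) • y with hp
  have hpne : ∀ k : ℤ, p (k+1) ≠ p k := by
    intro k h
    apply hxy
    have hc : cRH P ((k+1 : ℤ) : ℝ) = cRH P (k:ℝ) + 1 := by push_cast; rw [map_add, map_one]
    have hd : p (k+1) - p k = x - y := by
      simp only [hp, hc]
      exact qdiff_repr (cRH P (k:ℝ)) x y
    rw [h, sub_self] at hd
    rw [← sub_eq_zero, ← hd]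
  have hzkseg : ∀ k : ℤ, zk k ∈ seg P (p (k+1)) (p k) := by
    intro k
    refine ⟨lamk k - cRH P (k:ℝ), ?_, ?_, ?_⟩
    · rw [← AEEqFun.coeFn_le]
      filter_upwards [cF_zero (P := P), cF_sub (lamk k) (cRH P (k:ℝ)), hcoelamk k,
        cF_cRH (P := P) (k:ℝ)] with ω h1 h2 h3 h4
      rw [h1, h2, Pi.sub_apply, h3, h4, Pi.zero_apply]
      simp only [sub_nonneg]
      exact le_max_left _ _
    · rw [← AEEqFun.coeFn_le]
      filter_upwards [cF_one (P := P), cF_sub (lamk k) (cRH P (k:ℝ)), hcoelamk k,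
        cF_cRH (P := P) (k:ℝ)] with ω h1 h2 h3 h4
      rw [h1, h2, Pi.sub_apply, h3, h4, Pi.one_apply]
      have : max (k:ℝ) (min (⇑lam ω) ((k:ℝ)+1)) ≤ (k:ℝ) + 1 :=
        max_le (by linarith) (min_le_right _ _)
      linarith
    · have hc : cRH P ((k+1 : ℤ) : ℝ) = cRH P (k:ℝ) + 1 := by push_cast; rw [map_add, map_one]
      simp only [hzk, hp, hc]
      exact (zk_repr (cRH P (k:ℝ)) (lamk k) x y).symm
  have hTzk_line : ∀ k : ℤ, T (zk k) ∈ line P (T x) (T y) := by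
    intro k
    have h1 : T (zk k) ∈ seg P (T (p (k+1))) (T (p k)) := by
      rw [← hseg _ _ (hpne k)]; exact ⟨zk k, hzkseg k, rfl⟩
    exact seg_subset_line (int_points hst hinj hseg hxy (k+1)) (int_points hst hinj hseg hxy k) h1
  choose c hc using hTzk_line
  -- glue the coefficients
  have hG : Measurable (fun q : Ω × ℤ => ⇑(c q.2) q.1) :=
    measurable_from_prod_countable_left (fun k => AEEqFun.measurable (c k))
  have hF : Measurable (fun ω => ⇑(c ⌊⇑lam ω⌋) ω) :=
    hG.comp (measurable_id.prodMk hf.floor)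
  set ξ : Ω →ₘ[P] ℝ := AEEqFun.mk _ hF.aestronglyMeasurable with hξ
  have hcoeξ : ⇑ξ =ᵐ[P] fun ω => ⇑(c ⌊⇑lam ω⌋) ω := AEEqFun.coeFn_mk _ _
  -- per-piece identities
  have key : ∀ k : ℤ, ind P (A k) (hA k) • T (lam • x + (1 - lam) • y)
      = ind P (A k) (hA k) • (ξ • T x + (1 - ξ) • T y) := by
    intro k
    set i : Ω →ₘ[P] ℝ := ind P (A k) (hA k) with hi
    have e1 : i * lam = i * lamk k := by
      apply AEEqFun.ext
      filter_upwards [cF_mul i lam, cF_mul i (lamk k), ind_coe (P := P) (A k) (hA k),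
        hcoelamk k] with ω h1 h2 h3 h4
      rw [h1, h2, Pi.mul_apply, Pi.mul_apply, h3, h4]
      by_cases hω : ω ∈ A k
      · have hfl : ⌊⇑lam ω⌋ = k := hω
        obtain ⟨hge, hlt⟩ := Int.floor_eq_iff.mp hfl
        have : max (k:ℝ) (min (⇑lam ω) ((k:ℝ)+1)) = ⇑lam ω := by
          rw [min_eq_left hlt.le, max_eq_right hge]
        rw [this]
      · simp [hω]
    have e1s : i • (lam • x + (1 - lam) • y) = i • (lamk k • x + (1 - lamk k) • y) :=
      ind_smul_aff e1 x y
    have e2 : i • T (lam • x + (1 - lam) • y) = i • T (zk k) := loc hst (A k) (hA k) e1s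
    have e3 : i * c k = i * ξ := by
      apply AEEqFun.ext
      filter_upwards [cF_mul i (c k), cF_mul i ξ, ind_coe (P := P) (A k) (hA k),
        hcoeξ] with ω h1 h2 h3 h4
      rw [h1, h2, Pi.mul_apply, Pi.mul_apply, h3, h4]
      by_cases hω : ω ∈ A k
      · have hfl : ⌊⇑lam ω⌋ = k := hω
        rw [hfl]
      · simp [hω]
    rw [e2, hc k]
    exact ind_smul_aff e3 (T x) (T y)
  -- regularity
  set e : ℤ ≃ ℕ := Denumerable.eqv ℤ with he
  have hfinal : T (lam • x + (1 - lam) • y) = ξ • T x + (1 - ξ) • T y := by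
    apply hW'
    refine ⟨fun n => A (e.symm n), fun n => hA _, ?_, ?_, fun n => key _⟩
    · intro m n hmn
      rw [Set.eq_empty_iff_forall_notMem]
      rintro ω ⟨h1, h2⟩
      have g1 : ⌊⇑lam ω⌋ = e.symm m := h1
      have g2 : ⌊⇑lam ω⌋ = e.symm n := h2
      exact hmn (e.symm.injective (g1 ▸ g2))
    · rw [Set.eq_univ_iff_forall]
      intro ω
      rw [Set.mem_iUnion]
      refine ⟨e ⌊⇑lam ω⌋, ?_⟩
      show ⌊⇑lam ω⌋ ∈ ({e.symm (e ⌊⇑lam ω⌋)} : Set ℤ)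
      rw [Equiv.symm_apply_apply]
      rfl
  exact ⟨ξ, hfinal⟩

end Part3

namespace Part4
open L0 Aux Part2 Part3

variable {Ω : Type*} [MeasurableSpace Ω] {P : Measure Ω}
variable {W : Type*} [AddCommGroup W] [Module (Ω →ₘ[P] ℝ) W]

lemma line_self (w : W) : line P w w = {w} := by
  ext z
  constructor
  · rintro ⟨lam, rfl⟩
    have h : lam • w + (1-lam) • w = w := by
      rw [← add_smul]
      have : lam + (1 - lam) = 1 := by ring
      rw [this, one_smul]
    exact h
  · intro h
    rw [Set.mem_singleton_iff] at h
    rw [h]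
    exact left_mem_line w w

end Part4

/-- If `V, V'` are regular `L⁰(𝓕)`-modules, `V` contains an element `e` with full
support, and `T : V → V'` is bijective, stable and maps each `L⁰`-line segment to
an `L⁰`-line segment, then `T` maps each `L⁰`-line to an `L⁰`-line. -/
theorem stmt3 {Ω : Type*} [MeasurableSpace Ω] (P : Measure Ω) [IsProbabilityMeasure P]
    {V V' : Type*} [AddCommGroup V] [Module (Ω →ₘ[P] ℝ) V]
    [AddCommGroup V'] [Module (Ω →ₘ[P] ℝ) V']
    (hV : L0.IsRegular P V) (hV' : L0.IsRegular P V')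
    (he : ∃ e : V, L0.FullSupport P e)
    (T : V → V') (hbij : Function.Bijective T) (hstable : L0.IsStable P T)
    (hseg : ∀ x y : V, x ≠ y → T '' L0.seg P x y = L0.seg P (T x) (T y)) :
    ∀ x y : V, ∃ u v : V', T '' L0.line P x y = L0.line P u v := by
  intro x y
  by_cases hxy : x = y
  · subst hxy
    refine ⟨T x, T x, ?_⟩
    rw [Part4.line_self, Part4.line_self, Set.image_singleton]
  · refine ⟨T x, T y, ?_⟩
    apply Set.Subset.antisymm
    · exact Part3.lineSub hV' hstable hbij.injective hseg hxy
    · -- the inverse map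
      set E := Equiv.ofBijective T hbij with hE
      have hTE : ∀ w, T (E.symm w) = w := fun w => E.apply_symm_apply w
      have hET : ∀ w, E.symm (T w) = w := fun w => E.symm_apply_apply w
      have hstinv : L0.IsStable P (⇑E.symm) := by
        intro x' y' A hA
        apply hbij.injective
        rw [hTE, hstable (E.symm x') (E.symm y') A hA, hTE, hTE]
      have hseginv : ∀ u v : V', u ≠ v →
          ⇑E.symm '' L0.seg P u v = L0.seg P (E.symm u) (E.symm v) := by
        intro u v huv
        have hne : E.symm u ≠ E.symm v := fun h => huv (by rw [← hTE u, ← hTE v, h])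
        have h2 := hseg (E.symm u) (E.symm v) hne
        rw [hTE, hTE] at h2
        rw [← h2, ← Set.image_comp]
        have hcomp : ⇑E.symm ∘ T = id := funext fun w => hET w
        rw [hcomp, Set.image_id]
      have hTxy : T x ≠ T y := fun h => hxy (hbij.injective h)
      have hsub := Part3.lineSub hV hstinv E.symm.injective hseginv hTxy
      rw [hET, hET] at hsub
      intro w hw
      have h1 : E.symm w ∈ L0.line P x y := hsub ⟨w, hw, rfl⟩
      exact ⟨E.symm w, h1, hTE w⟩
end

section
/- Let V and V′ be two regular L⁰(𝓕)-modules. If T : V → V′ is stable, injective, and maps each L⁰-line to an L⁰-line, then T(l(x,y)) = l(T(x),T(y)) for any two distinct points x and y in V. -/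
open MeasureTheory

section Helpers
variable {Ω : Type*} [MeasurableSpace Ω] {P : Measure Ω}

theorem ind_coe' (A : Set Ω) (hA : MeasurableSet A) :
    ⇑(L0.ind P A hA) =ᵐ[P] A.indicator fun _ => (1:ℝ) := AEEqFun.coeFn_mk _ _

theorem ind_mul_self' (A : Set Ω) (hA : MeasurableSet A) :
    L0.ind P A hA * L0.ind P A hA = L0.ind P A hA := by
  apply AEEqFun.ext
  filter_upwards [AEEqFun.coeFn_mul (L0.ind P A hA) (L0.ind P A hA), ind_coe' A hA] with ω h1 h2
  rw [h1]
  by_cases h : ω ∈ A <;> simp [h2, h, Pi.mul_apply]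

theorem ind_mul_compl' (A : Set Ω) (hA : MeasurableSet A) :
    L0.ind P A hA * L0.ind P Aᶜ hA.compl = 0 := by
  apply AEEqFun.ext
  filter_upwards [AEEqFun.coeFn_mul (L0.ind P A hA) (L0.ind P Aᶜ hA.compl), ind_coe' A hA,
    ind_coe' Aᶜ hA.compl, AEEqFun.coeFn_zero (α := Ω) (μ := P) (β := ℝ)] with ω h1 h2 h3 h4
  rw [h1, h4]
  by_cases h : ω ∈ A <;> simp [Pi.mul_apply, h2, h3, h]

theorem ind_add_compl' (A : Set Ω) (hA : MeasurableSet A) :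
    L0.ind P A hA + L0.ind P Aᶜ hA.compl = 1 := by
  apply AEEqFun.ext
  filter_upwards [AEEqFun.coeFn_add (L0.ind P A hA) (L0.ind P Aᶜ hA.compl), ind_coe' A hA,
    ind_coe' Aᶜ hA.compl, AEEqFun.coeFn_one (α := Ω) (μ := P) (β := ℝ)] with ω h1 h2 h3 h4
  rw [h1, h4]
  by_cases h : ω ∈ A <;> simp [Pi.add_apply, h2, h3, h]

end Helpers

/-- If `V, V'` are regular `L⁰(𝓕)`-modules and `T : V → V'` is stable, injective
and maps each `L⁰`-line to an `L⁰`-line, then `T(l(x,y)) = l(T(x),T(y))` for any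
two distinct points `x, y ∈ V`. -/


theorem stmt4 {Ω : Type*} [MeasurableSpace Ω] (P : Measure Ω) [IsProbabilityMeasure P]
    {V V' : Type*} [AddCommGroup V] [Module (Ω →ₘ[P] ℝ) V]
    [AddCommGroup V'] [Module (Ω →ₘ[P] ℝ) V']
    (hV : L0.IsRegular P V) (hV' : L0.IsRegular P V')
    (T : V → V') (hstable : L0.IsStable P T) (hinj : Function.Injective T)
    (hline : ∀ x y : V, ∃ u v : V', T '' L0.line P x y = L0.line P u v) :
    ∀ x y : V, x ≠ y → T '' L0.line P x y = L0.line P (T x) (T y) := by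
  intro x y hxy
  obtain ⟨u, v, hL⟩ := hline x y
  obtain ⟨α, hα⟩ : T x ∈ L0.line P u v := hL ▸ ⟨x, ⟨1, by module⟩, rfl⟩
  obtain ⟨β, hβ⟩ : T y ∈ L0.line P u v := hL ▸ ⟨y, ⟨0, by module⟩, rfl⟩
  ext w
  constructor
  · rintro ⟨z, ⟨lam, rfl⟩, rfl⟩
    set z := lam • x + (1 - lam) • y with hz
    obtain ⟨γ, hγ⟩ : T z ∈ L0.line P u v := hL ▸ ⟨z, ⟨lam, hz⟩, rfl⟩
    set ξ : Ω →ₘ[P] ℝ := α - β with hξ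
    set A : Set Ω := (⇑ξ) ⁻¹' {0} with hAdef
    have hA : MeasurableSet A := ξ.measurable (measurableSet_singleton 0)
    have hsum := ind_add_compl' (P := P) A hA
    have h1 : L0.ind P A hA * ξ = 0 := by
      apply AEEqFun.ext
      filter_upwards [AEEqFun.coeFn_mul (L0.ind P A hA) ξ, ind_coe' A hA,
        AEEqFun.coeFn_zero (α := Ω) (μ := P) (β := ℝ)] with ω e1 e2 e3
      rw [e1, e3, Pi.mul_apply, e2]
      by_cases h : ω ∈ A
      · have : ξ ω = 0 := h
        simp [this]
      · simp [h]
    have hTxTy : T x - T y = ξ • (u - v) := by rw [hα, hβ, hξ]; module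
    have h3 : L0.ind P A hA • T x = L0.ind P A hA • T y := by
      have hd : L0.ind P A hA • T x - L0.ind P A hA • T y
          = (L0.ind P A hA * ξ) • (u - v) := by rw [← smul_sub, hTxTy, mul_smul]
      rw [h1, zero_smul] at hd
      exact sub_eq_zero.mp hd
    have h4 : L0.ind P A hA • x = L0.ind P A hA • y := by
      have e : T (L0.ind P A hA • x + L0.ind P Aᶜ hA.compl • y) = T y := by
        rw [hstable x y A hA, h3, ← add_smul, hsum, one_smul]
      have e2 := congrArg (fun w => L0.ind P A hA • w) (hinj e)
      simpa [smul_add, smul_smul, ind_mul_self', ind_mul_compl'] using e2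
    have h5 : L0.ind P A hA • z = L0.ind P A hA • x := by
      have hd : L0.ind P A hA • z - L0.ind P A hA • y
          = lam • (L0.ind P A hA • x - L0.ind P A hA • y) := by rw [hz]; module
      rw [h4, sub_self, smul_zero] at hd
      exact (sub_eq_zero.mp hd).trans h4.symm
    have h6 : L0.ind P A hA • T z = L0.ind P A hA • T x := by
      have e := hstable z x A hA
      rw [h5, ← add_smul, hsum, one_smul] at e
      have e2 := congrArg (fun w => L0.ind P A hA • w) e.symm
      simpa [smul_add, smul_smul, ind_mul_self', ind_mul_compl'] using e2
    have h8 : L0.ind P A hA • (T z - T y) = 0 := by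
      rw [smul_sub, h6, h3, sub_self]
    have hmeas : Measurable fun ω => if ξ ω = 0 then (0:ℝ) else (γ ω - β ω)/ξ ω :=
      Measurable.ite hA measurable_const ((γ.measurable.sub β.measurable).div ξ.measurable)
    set μ : Ω →ₘ[P] ℝ := AEEqFun.mk _ hmeas.aestronglyMeasurable with hμ
    have h7 : μ * ξ = L0.ind P Aᶜ hA.compl * (γ - β) := by
      apply AEEqFun.ext
      filter_upwards [AEEqFun.coeFn_mul μ ξ, AEEqFun.coeFn_mk _ hmeas.aestronglyMeasurable,
        AEEqFun.coeFn_mul (L0.ind P Aᶜ hA.compl) (γ - β), ind_coe' Aᶜ hA.compl,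
        AEEqFun.coeFn_sub γ β] with ω e1 e2 e3 e4 e5
      rw [e1, e3, Pi.mul_apply, Pi.mul_apply, e2, e4, e5]
      by_cases h : ξ ω = 0
      · have hmem : ω ∈ A := h
        simp [h, Set.indicator_of_notMem, hmem]
      · have hmem : ω ∉ A := h
        simp [h, Set.indicator_of_mem, hmem, Pi.sub_apply, div_mul_cancel₀ _ h]
    have hγβ : T z - T y = (γ - β) • (u - v) := by rw [hγ, hβ]; module
    have key : T z - (μ • T x + (1 - μ) • T y) = ((γ - β) - μ * ξ) • (u - v) := by
      have d1 : T z - (μ • T x + (1 - μ) • T y) = (T z - T y) - μ • (T x - T y) := by module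
      rw [d1, hγβ, hTxTy, smul_smul, ← sub_smul]
    have hco : (γ - β) - μ * ξ = L0.ind P A hA * (γ - β) := by
      have hc : L0.ind P Aᶜ hA.compl = 1 - L0.ind P A hA := by rw [← hsum]; ring
      rw [h7, hc]; ring
    refine ⟨μ, ?_⟩
    have hfin : T z - (μ • T x + (1 - μ) • T y) = 0 := by
      rw [key, hco, mul_smul, ← hγβ, h8]
    exact (sub_eq_zero.mp hfin)
  · rintro ⟨μ, rfl⟩
    rw [hL]
    exact ⟨μ * α + (1 - μ) * β, by rw [hα, hβ]; module⟩
end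

section
/- Let φ : L⁰(𝓕) → L⁰(𝓕) be a mapping such that: (1) φ has the local property, i.e., Ĩ_A·φ(ξ) = Ĩ_A·φ(Ĩ_A·ξ) for all ξ ∈ L⁰(𝓕) and A ∈ 𝓕; (2) φ(ξ+η) = φ(ξ)+φ(η) for all ξ, η ∈ L⁰(𝓕); (3) φ(ξη) = φ(ξ)φ(η) for all ξ, η ∈ L⁰(𝓕); (4) φ(1) = 1. Then φ is the identity mapping, i.e., φ(ξ) = ξ for all ξ ∈ L⁰(𝓕). -/
open MeasureTheory

namespace Stmt5Aux

variable {Ω : Type*} [MeasurableSpace Ω] {P : Measure Ω}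

/-- constant function as an element of L⁰ -/
noncomputable def cst (P : Measure Ω) (c : ℝ) : Ω →ₘ[P] ℝ :=
  AEEqFun.mk (fun _ => c) aestronglyMeasurable_const

theorem coeFn_cst (c : ℝ) : ⇑(cst P c) =ᵐ[P] fun _ => c := AEEqFun.coeFn_mk _ _

theorem cst_zero : cst P 0 = 0 := by
  apply AEEqFun.ext
  filter_upwards [coeFn_cst (P := P) 0, AEEqFun.coeFn_zero (μ := P) (β := ℝ)] with ω h1 h2
  simp [h1, h2]

theorem cst_one : cst P 1 = 1 := by
  apply AEEqFun.ext
  filter_upwards [coeFn_cst (P := P) 1, AEEqFun.coeFn_one (μ := P) (β := ℝ)] with ω h1 h2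
  simp [h1, h2]

theorem cst_add (a b : ℝ) : cst P a + cst P b = cst P (a + b) := by
  apply AEEqFun.ext
  filter_upwards [AEEqFun.coeFn_add (cst P a) (cst P b), coeFn_cst (P := P) a,
    coeFn_cst (P := P) b, coeFn_cst (P := P) (a + b)] with ω h1 h2 h3 h4
  simp [h1, h2, h3, h4]

theorem cst_mul (a b : ℝ) : cst P a * cst P b = cst P (a * b) := by
  apply AEEqFun.ext
  filter_upwards [AEEqFun.coeFn_mul (cst P a) (cst P b), coeFn_cst (P := P) a,
    coeFn_cst (P := P) b, coeFn_cst (P := P) (a * b)] with ω h1 h2 h3 h4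
  simp [h1, h2, h3, h4]

theorem cst_le {a b : ℝ} (h : a ≤ b) : cst P a ≤ cst P b := by
  rw [← AEEqFun.coeFn_le]
  filter_upwards [coeFn_cst (P := P) a, coeFn_cst (P := P) b] with ω h1 h2
  simp [h1, h2, h]

theorem coeFn_ind (A : Set Ω) (hA : MeasurableSet A) :
    ⇑(L0.ind P A hA) =ᵐ[P] A.indicator fun _ => (1:ℝ) := AEEqFun.coeFn_mk _ _

theorem ind_mul_self (A : Set Ω) (hA : MeasurableSet A) :
    L0.ind P A hA * L0.ind P A hA = L0.ind P A hA := by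
  apply AEEqFun.ext
  filter_upwards [AEEqFun.coeFn_mul (L0.ind P A hA) (L0.ind P A hA),
    coeFn_ind A hA] with ω h1 h2
  rw [h1]; simp only [Pi.mul_apply, h2]
  by_cases hω : ω ∈ A <;> simp [Set.indicator_of_mem, Set.indicator_of_notMem, hω]

theorem ind_add_compl (A : Set Ω) (hA : MeasurableSet A) :
    L0.ind P A hA + L0.ind P Aᶜ hA.compl = 1 := by
  apply AEEqFun.ext
  filter_upwards [AEEqFun.coeFn_add (L0.ind P A hA) (L0.ind P Aᶜ hA.compl),
    coeFn_ind A hA, coeFn_ind Aᶜ hA.compl, AEEqFun.coeFn_one (μ := P) (β := ℝ)]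
    with ω h1 h2 h3 h4
  rw [h1]; simp only [Pi.add_apply, h2, h3, h4]
  by_cases hω : ω ∈ A <;>
    simp [Set.indicator_of_mem, Set.indicator_of_notMem, hω]

theorem le_add_of_nonneg_right' {a b : Ω →ₘ[P] ℝ} (h : 0 ≤ b) : a ≤ a + b := by
  rw [← AEEqFun.coeFn_le] at h ⊢
  filter_upwards [AEEqFun.coeFn_add a b, AEEqFun.coeFn_zero (μ := P) (β := ℝ), h]
    with ω h1 h2 h3
  rw [h1]; simp only [Pi.add_apply]
  have : (0:ℝ) ≤ b ω := by rw [h2] at h3; exact h3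
  linarith

theorem sq_nonneg' (f : Ω →ₘ[P] ℝ) : (0 : Ω →ₘ[P] ℝ) ≤ f * f := by
  rw [← AEEqFun.coeFn_le]
  filter_upwards [AEEqFun.coeFn_mul f f, AEEqFun.coeFn_zero (μ := P) (β := ℝ)] with ω h1 h2
  rw [h1, h2]; exact mul_self_nonneg _

theorem exists_sqrt {f : Ω →ₘ[P] ℝ} (hf : (0 : Ω →ₘ[P] ℝ) ≤ f) :
    ∃ g : Ω →ₘ[P] ℝ, g * g = f := by
  refine ⟨AEEqFun.comp Real.sqrt Real.continuous_sqrt f, AEEqFun.ext ?_⟩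
  have hf' := AEEqFun.coeFn_le.mpr hf
  filter_upwards [AEEqFun.coeFn_mul (AEEqFun.comp Real.sqrt Real.continuous_sqrt f)
    (AEEqFun.comp Real.sqrt Real.continuous_sqrt f),
    AEEqFun.coeFn_comp Real.sqrt Real.continuous_sqrt f,
    AEEqFun.coeFn_zero (μ := P) (β := ℝ), hf'] with ω h1 h2 h3 h4
  rw [h1]; simp only [Pi.mul_apply, h2, Function.comp_apply]
  rw [h3] at h4
  exact Real.mul_self_sqrt h4

theorem sub_nonneg' {a b : Ω →ₘ[P] ℝ} (h : a ≤ b) : (0 : Ω →ₘ[P] ℝ) ≤ b - a := by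
  rw [← AEEqFun.coeFn_le] at h ⊢
  filter_upwards [AEEqFun.coeFn_sub b a, AEEqFun.coeFn_zero (μ := P) (β := ℝ), h]
    with ω h1 h2 h3
  rw [h1, h2]; simp only [Pi.sub_apply, Pi.zero_apply]; linarith

end Stmt5Aux

open Stmt5Aux in
/-- The identity is the unique local, additive, multiplicative and unital
self-mapping of `L⁰(𝓕)`. -/
theorem stmt5 {Ω : Type*} [MeasurableSpace Ω] (P : Measure Ω) [IsProbabilityMeasure P]
    (φ : (Ω →ₘ[P] ℝ) → (Ω →ₘ[P] ℝ))
    (hloc : ∀ (ξ : Ω →ₘ[P] ℝ) (A : Set Ω) (hA : MeasurableSet A),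
      L0.ind P A hA * φ ξ = L0.ind P A hA * φ (L0.ind P A hA * ξ))
    (hadd : ∀ ξ η : Ω →ₘ[P] ℝ, φ (ξ + η) = φ ξ + φ η)
    (hmul : ∀ ξ η : Ω →ₘ[P] ℝ, φ (ξ * η) = φ ξ * φ η)
    (hone : φ 1 = 1) :
    ∀ ξ : Ω →ₘ[P] ℝ, φ ξ = ξ := by
  -- φ(0) = 0
  have h0 : φ 0 = 0 := by
    have h := hadd 0 0
    rw [add_zero] at h
    have h' : φ 0 + 0 = φ 0 + φ 0 := by rw [add_zero]; exact h
    exact (add_left_cancel h').symm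
  -- φ(-x) = -φ(x)
  have hneg : ∀ x, φ (-x) = -φ x := by
    intro x
    have h := hadd x (-x)
    rw [add_neg_cancel, h0] at h
    exact eq_neg_of_add_eq_zero_right h.symm
  -- φ is monotone
  have hmono : ∀ x y : Ω →ₘ[P] ℝ, x ≤ y → φ x ≤ φ y := by
    intro x y hxy
    obtain ⟨s, hs⟩ := exists_sqrt (sub_nonneg' hxy)
    have h1 : φ y = φ x + φ s * φ s := by
      rw [← hmul, hs, ← hadd, add_sub_cancel]
    rw [h1]
    exact le_add_of_nonneg_right' (sq_nonneg' (φ s))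
  -- φ fixes indicators
  have hIA : ∀ (A : Set Ω) (hA : MeasurableSet A),
      L0.ind P A hA = L0.ind P A hA * φ (L0.ind P A hA) := by
    intro A hA
    have h := hloc 1 A hA
    rw [hone, mul_one] at h
    exact h
  have hind : ∀ (A : Set Ω) (hA : MeasurableSet A), φ (L0.ind P A hA) = L0.ind P A hA := by
    intro A hA
    have hc : L0.ind P Aᶜ hA.compl = 1 - L0.ind P A hA := by
      rw [← ind_add_compl A hA]; ring
    have hφc : φ (L0.ind P Aᶜ hA.compl) = 1 - φ (L0.ind P A hA) := by
      rw [hc, sub_eq_add_neg, hadd, hone, hneg, ← sub_eq_add_neg]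
    have h2 : L0.ind P Aᶜ hA.compl * φ (L0.ind P A hA) = 0 := by
      have := hIA Aᶜ hA.compl
      rw [hφc] at this
      linear_combination this
    calc φ (L0.ind P A hA)
        = (L0.ind P A hA + L0.ind P Aᶜ hA.compl) * φ (L0.ind P A hA) := by
          rw [ind_add_compl A hA, one_mul]
      _ = L0.ind P A hA * φ (L0.ind P A hA) + L0.ind P Aᶜ hA.compl * φ (L0.ind P A hA) := by
          ring
      _ = L0.ind P A hA := by rw [← hIA A hA, h2, add_zero]
  -- φ fixes natural constants
  have hnat : ∀ n : ℕ, φ (cst P n) = cst P n := by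
    intro n
    induction n with
    | zero => simp only [Nat.cast_zero, cst_zero, h0]
    | succ m ih =>
        have : cst P ((m : ℝ) + 1) = cst P m + 1 := by rw [← cst_add, cst_one]
        rw [Nat.cast_succ, this, hadd, ih, hone]
  -- φ fixes rational constants
  have hrat : ∀ q : ℚ, φ (cst P (q : ℝ)) = cst P (q : ℝ) := by
    intro q
    have hden : ((q.den : ℝ)) ≠ 0 := by positivity
    have hqd : (q : ℝ) * (q.den : ℝ) = (q.num : ℝ) := by
      rw [Rat.cast_def]; field_simp
    have hnum : φ (cst P (q.num : ℝ)) = cst P (q.num : ℝ) := by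
      rcases Int.eq_nat_or_neg q.num with ⟨m, hm | hm⟩
      · rw [hm]; push_cast; exact hnat m
      · have hm' : ((q.num : ℤ) : ℝ) = -(m : ℝ) := by rw [hm]; push_cast; ring
        have hcm : cst P ((q.num : ℤ) : ℝ) = -cst P (m : ℝ) := by
          rw [hm']
          have h := cst_add (P := P) (m : ℝ) (-(m : ℝ))
          rw [add_neg_cancel, cst_zero] at h
          linear_combination h
        rw [hcm, hneg, hnat m]
    have key : φ (cst P (q : ℝ)) * cst P (q.den : ℝ) = cst P (q.num : ℝ) := by
      rw [← hnat q.den, ← hmul, cst_mul, hqd]; exact hnum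
    have hinv : cst P (q.den : ℝ) * cst P ((q.den : ℝ))⁻¹ = 1 := by
      rw [cst_mul, mul_inv_cancel₀ hden, cst_one]
    calc φ (cst P (q : ℝ))
        = φ (cst P (q : ℝ)) * (cst P (q.den : ℝ) * cst P ((q.den : ℝ))⁻¹) := by
          rw [hinv, mul_one]
      _ = (φ (cst P (q : ℝ)) * cst P (q.den : ℝ)) * cst P ((q.den : ℝ))⁻¹ := by ring
      _ = cst P (q.num : ℝ) * cst P ((q.den : ℝ))⁻¹ := by rw [key]
      _ = cst P (q : ℝ) := by rw [cst_mul, Rat.cast_def]; ring_nf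
  -- φ fixes real constants
  have hreal : ∀ c : ℝ, φ (cst P c) = cst P c := by
    intro c
    apply AEEqFun.ext
    have lo : ∀ q : ℚ, (q : ℝ) ≤ c → ∀ᵐ ω ∂P, (q : ℝ) ≤ (φ (cst P c)) ω := by
      intro q hq
      have h1 : cst P (q : ℝ) ≤ φ (cst P c) := by
        rw [← hrat q]; exact hmono _ _ (cst_le hq)
      filter_upwards [AEEqFun.coeFn_le.mpr h1, coeFn_cst (P := P) (q : ℝ)] with ω ha hb
      rw [hb] at ha; exact ha
    have hi : ∀ q : ℚ, c ≤ (q : ℝ) → ∀ᵐ ω ∂P, (φ (cst P c)) ω ≤ (q : ℝ) := by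
      intro q hq
      have h1 : φ (cst P c) ≤ cst P (q : ℝ) := by
        rw [← hrat q]; exact hmono _ _ (cst_le hq)
      filter_upwards [AEEqFun.coeFn_le.mpr h1, coeFn_cst (P := P) (q : ℝ)] with ω ha hb
      rw [hb] at ha; exact ha
    have lo' : ∀ᵐ ω ∂P, ∀ q : ℚ, (q : ℝ) ≤ c → (q : ℝ) ≤ (φ (cst P c)) ω := by
      rw [MeasureTheory.ae_all_iff]
      intro q
      by_cases hq : (q : ℝ) ≤ c
      · filter_upwards [lo q hq] with ω h _; exact h
      · filter_upwards with ω h; exact absurd h hq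
    have hi' : ∀ᵐ ω ∂P, ∀ q : ℚ, c ≤ (q : ℝ) → (φ (cst P c)) ω ≤ (q : ℝ) := by
      rw [MeasureTheory.ae_all_iff]
      intro q
      by_cases hq : c ≤ (q : ℝ)
      · filter_upwards [hi q hq] with ω h _; exact h
      · filter_upwards with ω h; exact absurd h hq
    filter_upwards [lo', hi', coeFn_cst (P := P) c] with ω h1 h2 h3
    rw [h3]
    refine le_antisymm ?_ ?_
    · by_contra h
      push_neg at h
      obtain ⟨q, hq1, hq2⟩ := exists_rat_btwn h
      exact absurd (h2 q hq1.le) (not_le.mpr hq2)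
    · by_contra h
      push_neg at h
      obtain ⟨q, hq1, hq2⟩ := exists_rat_btwn h
      exact absurd (h1 q hq2.le) (not_le.mpr hq1)
  -- main argument
  intro ξ
  apply AEEqFun.ext
  have main : ∀ n : ℕ, ∀ᵐ ω ∂P, |(φ ξ) ω - ξ ω| ≤ 1 / ((n : ℝ) + 1) := by
    intro n
    have hεpos : (0:ℝ) < 1 / ((n : ℝ) + 1) := by positivity
    generalize hεd : (1 / ((n : ℝ) + 1) : ℝ) = ε at hεpos ⊢
    -- the key local estimate
    have keygen : ∀ (B : Set Ω) (hB : MeasurableSet B) (c : ℝ),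
        (∀ ω ∈ B, c ≤ ξ ω ∧ ξ ω < c + ε) →
        ∀ᵐ ω ∂P, ω ∈ B → |(φ ξ) ω - ξ ω| ≤ ε := by
      intro B hB c hBc
      obtain ⟨η, hηdef⟩ : ∃ η, η = L0.ind P B hB * ξ - cst P c * L0.ind P B hB := ⟨_, rfl⟩
      have hIξ : L0.ind P B hB * ξ = η + cst P c * L0.ind P B hB := by rw [hηdef]; ring
      have hηco : ⇑η =ᵐ[P] fun ω => B.indicator (fun _ => (1:ℝ)) ω * ξ ω
          - c * B.indicator (fun _ => (1:ℝ)) ω := by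
        rw [hηdef]
        filter_upwards [AEEqFun.coeFn_sub (L0.ind P B hB * ξ) (cst P c * L0.ind P B hB),
          AEEqFun.coeFn_mul (L0.ind P B hB) ξ, AEEqFun.coeFn_mul (cst P c) (L0.ind P B hB),
          coeFn_cst (P := P) c, coeFn_ind B hB] with ω e1 e2 e3 e4 e5
        rw [e1]
        simp only [Pi.sub_apply, Pi.mul_apply]
        rw [e2, e3]
        simp only [Pi.mul_apply]
        rw [e4, e5]
      have h1 : (0 : Ω →ₘ[P] ℝ) ≤ η := by
        rw [← AEEqFun.coeFn_le]
        filter_upwards [hηco, AEEqFun.coeFn_zero (μ := P) (β := ℝ)] with ω e1 e2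
        rw [e1, e2]
        simp only [Pi.zero_apply]
        by_cases hω : ω ∈ B
        · obtain ⟨hb1, _⟩ := hBc ω hω
          rw [Set.indicator_of_mem hω]
          simp only [one_mul, mul_one]
          linarith
        · rw [Set.indicator_of_notMem hω]
          simp
      have h2 : η ≤ cst P ε := by
        rw [← AEEqFun.coeFn_le]
        filter_upwards [hηco, coeFn_cst (P := P) ε] with ω e1 e2
        rw [e1, e2]
        by_cases hω : ω ∈ B
        · obtain ⟨_, hb2⟩ := hBc ω hω
          rw [Set.indicator_of_mem hω]
          simp only [one_mul, mul_one]
          linarith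
        · rw [Set.indicator_of_notMem hω]
          simp only [zero_mul, mul_zero, sub_zero]
          linarith
      have h3 : (0 : Ω →ₘ[P] ℝ) ≤ φ η := by rw [← h0]; exact hmono _ _ h1
      have h4 : φ η ≤ cst P ε := (hreal ε) ▸ hmono _ _ h2
      have h3' : ∀ᵐ ω ∂P, (0:ℝ) ≤ (φ η) ω := by
        filter_upwards [AEEqFun.coeFn_le.mpr h3, AEEqFun.coeFn_zero (μ := P) (β := ℝ)]
          with ω e1 e2
        rw [e2] at e1
        exact e1
      have h4' : ∀ᵐ ω ∂P, (φ η) ω ≤ ε := by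
        filter_upwards [AEEqFun.coeFn_le.mpr h4, coeFn_cst (P := P) ε] with ω e1 e2
        rw [e2] at e1
        exact e1
      have h5 : L0.ind P B hB * φ ξ = L0.ind P B hB * φ η + cst P c * L0.ind P B hB := by
        rw [hloc ξ B hB, hIξ, hadd, hmul, hreal c, hind B hB, mul_add, mul_left_comm,
          ind_mul_self]
      have h5' : ⇑(L0.ind P B hB * φ ξ)
          =ᵐ[P] ⇑(L0.ind P B hB * φ η + cst P c * L0.ind P B hB) := by rw [h5]
      filter_upwards [h5', AEEqFun.coeFn_mul (L0.ind P B hB) (φ ξ),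
        AEEqFun.coeFn_add (L0.ind P B hB * φ η) (cst P c * L0.ind P B hB),
        AEEqFun.coeFn_mul (L0.ind P B hB) (φ η), AEEqFun.coeFn_mul (cst P c) (L0.ind P B hB),
        coeFn_cst (P := P) c, coeFn_ind B hB, h3', h4']
        with ω e1 e2 e3 e4 e5 e6 e7 e8 e9
      intro hω
      have hind1 : B.indicator (fun _ => (1:ℝ)) ω = 1 := Set.indicator_of_mem hω _
      have E : (φ ξ) ω = (φ η) ω + c := by
        rw [e2, e3] at e1
        simp only [Pi.mul_apply, Pi.add_apply] at e1
        rw [e4, e5] at e1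
        simp only [Pi.mul_apply] at e1
        rw [e6, e7, hind1] at e1
        simpa using e1
      obtain ⟨hb1, hb2⟩ := hBc ω hω
      rw [abs_le, E]
      constructor <;> linarith
    -- the partition
    have key : ∀ k : ℤ, ∀ᵐ ω ∂P,
        ω ∈ (⇑ξ ⁻¹' Set.Ico ((k : ℝ) * ε) (((k : ℝ) + 1) * ε)) → |(φ ξ) ω - ξ ω| ≤ ε := by
      intro k
      apply keygen _ (ξ.measurable measurableSet_Ico) ((k : ℝ) * ε)
      intro ω hω
      obtain ⟨hb1, hb2⟩ := hω
      constructor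
      · exact hb1
      · calc ξ ω < ((k : ℝ) + 1) * ε := hb2
          _ = (k : ℝ) * ε + ε := by ring
    filter_upwards [MeasureTheory.ae_all_iff.mpr key] with ω h
    refine h ⌊ξ ω / ε⌋ ?_
    constructor
    · rw [← le_div_iff₀ hεpos]
      exact Int.floor_le _
    · rw [← div_lt_iff₀ hεpos]
      exact Int.lt_floor_add_one _
  filter_upwards [MeasureTheory.ae_all_iff.mpr main] with ω h
  have habs : |(φ ξ) ω - ξ ω| ≤ 0 := by
    by_contra hcon
    push_neg at hcon
    obtain ⟨n, hn⟩ := exists_nat_one_div_lt hcon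
    exact absurd (h n) (not_le.mpr hn)
  exact sub_eq_zero.mp (abs_eq_zero.mp (le_antisymm habs (abs_nonneg _)))
end

section
/- Let V be a regular L⁰(𝓕)-module and x an element of V with full support. If ξ and η are elements of L⁰(𝓕) such that ξ·x = η·x, then ξ = η. -/
open MeasureTheory

/-- In a regular `L⁰(𝓕)`-module, if `x` has full support and `ξ·x = η·x` with
`ξ, η ∈ L⁰(𝓕)`, then `ξ = η`. -/
theorem stmt13 {Ω : Type*} [MeasurableSpace Ω] (P : Measure Ω) [IsProbabilityMeasure P]
    {V : Type*} [AddCommGroup V] [Module (Ω →ₘ[P] ℝ) V]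
    (hV : L0.IsRegular P V) (x : V) (hx : L0.FullSupport P x)
    (ξ η : Ω →ₘ[P] ℝ) (h : ξ • x = η • x) :
    ξ = η := by
  set δ := ξ - η with hδ
  have hδx : δ • x = 0 := by rw [hδ, sub_smul, h, sub_self]
  have hm : Measurable (⇑δ) := δ.measurable
  set A : Set Ω := {ω | δ ω ≠ 0} with hAdef
  have hA : MeasurableSet A := (hm (measurableSet_singleton 0)).compl
  have hg : Measurable (fun ω => (δ ω)⁻¹) := hm.inv
  have hmk : AEEqFun.mk (fun ω => (δ ω)⁻¹) hg.aestronglyMeasurable * δ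
      = L0.ind P A hA := by
    rw [L0.ind]
    apply AEEqFun.ext
    filter_upwards [AEEqFun.coeFn_mul (AEEqFun.mk (fun ω => (δ ω)⁻¹) hg.aestronglyMeasurable) δ,
      AEEqFun.coeFn_mk (fun ω => (δ ω)⁻¹) hg.aestronglyMeasurable,
      AEEqFun.coeFn_mk (A.indicator fun _ => (1:ℝ))
        (measurable_const.indicator hA).aestronglyMeasurable] with ω h1 h2 h3
    rw [h3]
    rw [Pi.mul_apply] at h1
    rw [h1, h2]
    by_cases hω : δ ω = 0
    · simp [hω, Set.indicator, hAdef]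
    · simp [Set.indicator, hAdef, hω, inv_mul_cancel₀ hω]
  have hindx : L0.ind P A hA • x = 0 := by
    rw [← hmk, mul_smul, hδx, smul_zero]
  have hPA : P A = 0 := hx A hA hindx
  have : δ = 0 := by
    apply AEEqFun.ext
    have : ∀ᵐ ω ∂P, ω ∉ A := by
      rw [MeasureTheory.ae_iff]
      simpa using hPA
    filter_upwards [this] with ω hω
    simpa [hAdef] using hω
  rw [← sub_eq_zero]
  exact this
end

section
/- Let V be a regular L⁰(𝓕)-module and x ∈ V. Then there exists A ∈ 𝓕 such that Ĩ_A·x = 0 and for every B ∈ 𝓕 with Ĩ_B·x = 0 one has P(B \ A) = 0; in other words, the family {B ∈ 𝓕 : Ĩ_B·x = 0} has a largest element up to null sets, and Ĩ_A·x = 0 holds for this largest element A (so that A^c is a support of x). -/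
open MeasureTheory

section Aux

open MeasureTheory Set Filter Topology

variable {Ω : Type*} [MeasurableSpace Ω] {P : Measure Ω}

lemma L0.ind_congr {A B : Set Ω} (h : A = B) (hA : MeasurableSet A) (hB : MeasurableSet B) :
    L0.ind P A hA = L0.ind P B hB := by subst h; rfl

lemma L0.ind_empty (h : MeasurableSet (∅ : Set Ω)) : L0.ind P ∅ h = 0 := by
  unfold L0.ind
  simp only [Set.indicator_empty]
  rfl

lemma L0.ind_mul {A B : Set Ω} (hA : MeasurableSet A) (hB : MeasurableSet B) :
    L0.ind P A hA * L0.ind P B hB = L0.ind P (A ∩ B) (hA.inter hB) := by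
  unfold L0.ind
  rw [AEEqFun.mk_mul_mk]
  congr 1
  funext ω
  by_cases h1 : ω ∈ A <;> by_cases h2 : ω ∈ B <;>
    simp [Set.indicator_apply, h1, h2, Set.mem_inter_iff]

lemma L0.ind_add_ind {A B : Set Ω} (hA : MeasurableSet A) (hB : MeasurableSet B) :
    L0.ind P (A ∪ B) (hA.union hB) + L0.ind P (A ∩ B) (hA.inter hB)
      = L0.ind P A hA + L0.ind P B hB := by
  unfold L0.ind
  rw [AEEqFun.mk_add_mk, AEEqFun.mk_add_mk]
  congr 1
  funext ω
  by_cases h1 : ω ∈ A <;> by_cases h2 : ω ∈ B <;>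
    simp [Set.indicator_apply, h1, h2, Set.mem_inter_iff]

variable {V : Type*} [AddCommGroup V] [Module (Ω →ₘ[P] ℝ) V]

lemma L0.ind_smul_ind_smul {A B : Set Ω} (hA : MeasurableSet A) (hB : MeasurableSet B) (y : V) :
    L0.ind P A hA • (L0.ind P B hB • y) = L0.ind P (A ∩ B) (hA.inter hB) • y := by
  rw [← mul_smul, L0.ind_mul]

lemma L0.union_zero {x : V} {A B : Set Ω} (hA : MeasurableSet A) (hB : MeasurableSet B)
    (h1 : L0.ind P A hA • x = 0) (h2 : L0.ind P B hB • x = 0) :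
    L0.ind P (A ∪ B) (hA.union hB) • x = 0 := by
  have h3 : L0.ind P (A ∪ B) (hA.union hB)
      = L0.ind P A hA + L0.ind P B hB - L0.ind P (A ∩ B) (hA.inter hB) :=
    eq_sub_of_add_eq (L0.ind_add_ind hA hB)
  rw [h3, sub_smul, add_smul, h1, h2, ← L0.ind_mul hA hB, mul_smul, h2, smul_zero]
  simp

lemma L0.iUnion_zero (hV : L0.IsRegular P V) {x : V} (B : ℕ → Set Ω)
    (hB : ∀ n, MeasurableSet (B n)) (h : ∀ n, L0.ind P (B n) (hB n) • x = 0) :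
    L0.ind P (⋃ n, B n) (MeasurableSet.iUnion hB) • x = 0 := by
  set A : Set Ω := ⋃ n, B n with hAdef
  have hA : MeasurableSet A := MeasurableSet.iUnion hB
  set C : ℕ → Set Ω := fun n => Nat.casesOn n Aᶜ (disjointed B) with hCdef
  have hC : ∀ n, MeasurableSet (C n) := by
    rintro (_ | n)
    · exact hA.compl
    · exact MeasurableSet.disjointed hB n
  have hDsub : ∀ n, disjointed B n ⊆ A := fun n =>
    (disjointed_subset B n).trans (Set.subset_iUnion B n)
  apply hV (L0.ind P A hA • x) 0
  refine ⟨C, hC, ?_, ?_, ?_⟩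
  · rintro (_ | m) (_ | n) hmn
    · exact absurd rfl hmn
    · exact Set.eq_empty_of_subset_empty fun ω hω =>
        hω.1 (hDsub n hω.2)
    · exact Set.eq_empty_of_subset_empty fun ω hω =>
        hω.2 (hDsub m hω.1)
    · exact Set.disjoint_iff_inter_eq_empty.mp
        (disjoint_disjointed B (fun hc => hmn (congrArg Nat.succ hc)))
  · ext ω
    simp only [Set.mem_iUnion, Set.mem_univ, iff_true]
    by_cases hω : ω ∈ A
    · rw [hAdef, ← iUnion_disjointed] at hω
      obtain ⟨k, hk⟩ := Set.mem_iUnion.mp hω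
      exact ⟨k + 1, hk⟩
    · exact ⟨0, hω⟩
  · rintro (_ | n)
    · show L0.ind P Aᶜ hA.compl • (L0.ind P A hA • x) = _
      rw [L0.ind_smul_ind_smul, L0.ind_congr (Set.compl_inter_self A) _
        MeasurableSet.empty, L0.ind_empty, zero_smul, smul_zero]
    · show L0.ind P (disjointed B n) (MeasurableSet.disjointed hB n)
        • (L0.ind P A hA • x) = _
      rw [L0.ind_smul_ind_smul,
        L0.ind_congr (Set.inter_eq_left.mpr (hDsub n)) _ (MeasurableSet.disjointed hB n),
        L0.ind_congr (Set.inter_eq_left.mpr (disjointed_subset B n)).symm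
          (MeasurableSet.disjointed hB n) ((MeasurableSet.disjointed hB n).inter (hB n)),
        ← L0.ind_smul_ind_smul (MeasurableSet.disjointed hB n) (hB n), h n, smul_zero, smul_zero]

end Aux

/-- In a regular `L⁰(𝓕)`-module, every element `x` admits a support: there is a
measurable `A` with `Ĩ_A·x = 0` which is largest (up to null sets) among all
measurable `B` with `Ĩ_B·x = 0`; then `Aᶜ` is a support of `x`. -/
theorem stmt15 {Ω : Type*} [MeasurableSpace Ω] (P : Measure Ω) [IsProbabilityMeasure P]
    {V : Type*} [AddCommGroup V] [Module (Ω →ₘ[P] ℝ) V]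
    (hV : L0.IsRegular P V) (x : V) :
    ∃ (A : Set Ω) (hA : MeasurableSet A), L0.ind P A hA • x = 0 ∧
      ∀ (B : Set Ω) (hB : MeasurableSet B), L0.ind P B hB • x = 0 → P (B \ A) = 0 := by
  classical
  set S : Set (Set Ω) := {B | ∃ h : MeasurableSet B, L0.ind P B h • x = 0} with hSdef
  have hempty : (∅ : Set Ω) ∈ S :=
    ⟨MeasurableSet.empty, by rw [L0.ind_empty, zero_smul]⟩
  set T : Set ENNReal := (fun B => P B) '' S with hTdef
  have hTne : T.Nonempty := ⟨P ∅, ∅, hempty, rfl⟩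
  have hTbdd : BddAbove T := OrderTop.bddAbove T
  obtain ⟨u, -, hu_tendsto, hu_mem⟩ := exists_seq_tendsto_sSup hTne hTbdd
  have hchoice : ∀ n, ∃ B ∈ S, P B = u n := fun n => (hu_mem n)
  choose B hBS hBP using hchoice
  have hBmeas : ∀ n, MeasurableSet (B n) := fun n => (hBS n).1
  have hBzero : ∀ n, L0.ind P (B n) (hBmeas n) • x = 0 := fun n => (hBS n).2
  set A : Set Ω := ⋃ n, B n with hAdef
  have hA : MeasurableSet A := MeasurableSet.iUnion hBmeas
  have hAzero : L0.ind P A hA • x = 0 := L0.iUnion_zero hV B hBmeas hBzero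
  have hAS : A ∈ S := ⟨hA, hAzero⟩
  have hPA_le : P A ≤ sSup T := le_sSup ⟨A, hAS, rfl⟩
  have hPA_ge : sSup T ≤ P A := by
    refine le_of_tendsto hu_tendsto (Filter.Eventually.of_forall fun n => ?_)
    rw [← hBP n]
    exact measure_mono (Set.subset_iUnion B n)
  refine ⟨A, hA, hAzero, fun C hC hCzero => ?_⟩
  have hUS : A ∪ C ∈ S := ⟨hA.union hC, L0.union_zero hA hC hAzero hCzero⟩
  have hmem : P (A ∪ C) ∈ T := ⟨A ∪ C, hUS, rfl⟩
  have hle : P (A ∪ C) ≤ P A := (le_sSup hmem).trans hPA_ge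
  have heq : P (A ∪ C) = P A + P (C \ A) := by
    rw [← Set.union_diff_self, measure_union Set.disjoint_sdiff_right (hC.diff hA)]
  rw [heq] at hle
  have h2 : P (C \ A) ≤ 0 := ENNReal.le_of_add_le_add_left (measure_ne_top P A)
    (hle.trans_eq (add_zero (P A)).symm)
  exact le_antisymm h2 zero_le
end
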